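/- arXiv:2212.12723 — 10 statements merged into one kernel-verified Lean document; each statement's English description precedes it below -/
import Mathlib

section
/- Let G be a permutation group on a finite set Ω that contains a 3-cycle. Then the relation on Ω defined by a ≡ b iff a = b or there exists c such that the 3-cycle (a,b,c) lies in G is an equivalence relation. -/
namespace Equiv.Perm

variable {α : Type*} [DecidableEq α]

/-- The permutation `a ↦ b ↦ c ↦ a`; it is a genuine 3-cycle only when `a`, `b`, `c` are
distinct. -/
def threeCycle (a b c : α) : Perm α := swap a c * swap a b

theorem threeCycle_apply_left {a b c : α} (hab : a ≠ b) (hbc : b ≠ c) :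
    threeCycle a b c a = b := by
  simp [threeCycle, swap_apply_of_ne_of_ne hab.symm hbc]

theorem threeCycle_apply_of_ne {a b c x : α} (ha : x ≠ a) (hb : x ≠ b) (hc : x ≠ c) :
    threeCycle a b c x = x := by
  simp [threeCycle, swap_apply_of_ne_of_ne, *]

theorem threeCycle_inv (a b c : α) : (threeCycle a b c)⁻¹ = threeCycle a c b := by
  simp [threeCycle, mul_inv_rev]

theorem threeCycle_rotate {a b c : α} (hab : a ≠ b) (hac : a ≠ c) (hbc : b ≠ c) :
    threeCycle b c a = threeCycle a b c := by
  ext x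
  simp only [threeCycle, Perm.mul_apply, swap_apply_def]
  split_ifs <;> simp_all

theorem mul_threeCycle_mul_inv (τ : Perm α) (a b c : α) :
    τ * threeCycle a b c * τ⁻¹ = threeCycle (τ a) (τ b) (τ c) := by
  simp only [threeCycle, swap_apply_apply]
  group

theorem isThreeCycle_threeCycle_iff [Fintype α] {a b c : α} :
    IsThreeCycle (threeCycle a b c) ↔ a ≠ b ∧ a ≠ c ∧ b ≠ c := by
  refine ⟨fun h => ?_, fun ⟨hab, hac, hbc⟩ => isThreeCycle_swap_mul_swap_same hac hab hbc.symm⟩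
  have hcard := h.card_support
  unfold threeCycle at hcard
  refine ⟨?_, ?_, ?_⟩ <;> rintro rfl
  · rcases eq_or_ne a c with rfl | hac <;> simp_all [← Perm.one_def]
  · rcases eq_or_ne a b with rfl | hab <;> simp_all [← Perm.one_def]
  · simp_all

section ThreeCycleRel

variable [Fintype α] (G : Subgroup (Perm α))

def ThreeCycleRel (a b : α) : Prop :=
  ∃ c, threeCycle a b c ∈ G ∧ IsThreeCycle (threeCycle a b c)

variable {G}

theorem ThreeCycleRel.symm {a b : α} (h : ThreeCycleRel G a b) : ThreeCycleRel G b a := by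
  obtain ⟨c, hmem, hcyc⟩ := h
  obtain ⟨hab, hac, hbc⟩ := isThreeCycle_threeCycle_iff.mp hcyc
  refine ⟨c, ?_, isThreeCycle_threeCycle_iff.mpr ⟨hab.symm, hbc, hac⟩⟩
  rw [← threeCycle_rotate hab.symm hbc hac, ← threeCycle_inv]
  exact inv_mem hmem

theorem ThreeCycleRel.trans_of_ne {a b d : α} (h₁ : ThreeCycleRel G a b)
    (h₂ : ThreeCycleRel G b d) (had : a ≠ d) : ThreeCycleRel G a d := by
  obtain ⟨c, hσ, hσ3⟩ := h₁
  obtain ⟨e, hτ, hτ3⟩ := h₂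
  obtain ⟨hab, hac, hbc⟩ := isThreeCycle_threeCycle_iff.mp hσ3
  obtain ⟨hbd, -, hde⟩ := isThreeCycle_threeCycle_iff.mp hτ3
  rcases eq_or_ne a e with rfl | hae
  · -- `(b, d, a)⁻¹ = (a, d, b)`
    refine ⟨b, ?_, isThreeCycle_threeCycle_iff.mpr ⟨had, hab, hbd.symm⟩⟩
    rw [threeCycle_rotate hab.symm hbd had, ← threeCycle_inv]
    exact inv_mem hτ
  · -- conjugating `(a, b, c)` by `τ = (b, d, e)`, which fixes `a`, gives `(a, d, τ c)`
    set τ := threeCycle b d e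
    have hτa : τ a = a := threeCycle_apply_of_ne hab had hae
    have hτb : τ b = d := threeCycle_apply_left hbd hde
    refine ⟨τ c, ?_, ?_⟩
    · rw [← hτa, ← hτb, ← mul_threeCycle_mul_inv]
      exact mul_mem (mul_mem hτ hσ) (inv_mem hτ)
    · rw [← hτa, ← hτb, isThreeCycle_threeCycle_iff]
      exact ⟨τ.injective.ne hab, τ.injective.ne hac, τ.injective.ne hbc⟩

end ThreeCycleRel

end Equiv.Perm

open Equiv.Perm in
theorem stmt_0_general {Ω : Type*} [Fintype Ω] [DecidableEq Ω]
    (G : Subgroup (Equiv.Perm Ω)) :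
    Equivalence (fun a b : Ω => a = b ∨ ∃ c : Ω,
      (Equiv.swap a c * Equiv.swap a b) ∈ G ∧
      Equiv.Perm.IsThreeCycle (Equiv.swap a c * Equiv.swap a b)) := by
  change Equivalence fun a b => a = b ∨ ThreeCycleRel G a b
  refine ⟨fun _ => Or.inl rfl, ?_, ?_⟩
  · rintro a b (rfl | hab)
    exacts [Or.inl rfl, Or.inr hab.symm]
  · rintro a b d (rfl | hab) hbd
    · exact hbd
    rcases hbd with rfl | hbd
    · exact Or.inr hab
    rcases eq_or_ne a d with rfl | had
    exacts [Or.inl rfl, Or.inr (hab.trans_of_ne hbd had)]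

/-- If a permutation group `G` on a finite set `Ω` contains a 3-cycle,
then the relation `a ≡ b ↔ a = b ∨ ∃ c, (a,b,c) ∈ G` (where `(a,b,c)` denotes the
3-cycle `a ↦ b ↦ c ↦ a`, realized as `swap a c * swap a b`) is an equivalence relation. -/
theorem stmt_0 {Ω : Type*} [Fintype Ω] [DecidableEq Ω]
    (G : Subgroup (Equiv.Perm Ω))
    (h : ∃ σ ∈ G, Equiv.Perm.IsThreeCycle σ) :
    Equivalence (fun a b : Ω => a = b ∨ ∃ c : Ω,
      (Equiv.swap a c * Equiv.swap a b) ∈ G ∧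
      Equiv.Perm.IsThreeCycle (Equiv.swap a c * Equiv.swap a b)) :=
  stmt_0_general G
end

section
/- Two 3-cycles in a symmetric group whose supports intersect (i.e., which both move some common point) generate a group containing the alternating group on the union of their supports, which has 3, 4 or 5 points. -/
/-!
Let `n = #(supp σ ∪ supp τ) = 6 - #(supp σ ∩ supp τ) ∈ {3, 4, 5}`. Restricted to the union of the
supports, `K = ⟨σ, τ⟩` is a subgroup of `Aₙ` of order divisible by `3`; for `n = 4` its order
exceeds `3` because `τ ∉ ⟨σ⟩`, and for `n = 5` it is divisible by `5` because `στ` is then a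
`5`-cycle. So `[Aₙ : K] ≤ 2` for `n ≤ 4`, and then `K` contains all squares, hence all `3`-cycles;
and `[A₅ : K] ≤ 4`, which forces `K = A₅`: otherwise the simple group `A₅` would act faithfully on
the at most `4` cosets of `K`, while `4! < 60`.
-/

open Equiv Equiv.Perm Subgroup Finset
open scoped Nat

namespace Subgroup

variable {G : Type*} [Group G]

theorem card_mul_relIndex {H K : Subgroup G} (h : H ≤ K) :
    Nat.card H * H.relIndex K = Nat.card K := by
  rw [← relIndex_bot_left, ← relIndex_bot_left]
  exact relIndex_mul_relIndex _ _ _ bot_le h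

theorem eq_top_of_factorial_index_lt [IsSimpleGroup G] [Finite G] {H : Subgroup G}
    (h : H.index ! < Nat.card G) : H = ⊤ := by
  by_contra hH
  have hcore : H.normalCore = ⊥ := H.normalCore_normal.eq_bot_or_eq_top.resolve_right
    fun htop ↦ hH (top_le_iff.mp (htop ▸ H.normalCore_le))
  have hinj : Function.Injective (MulAction.toPermHom G (G ⧸ H)) := by
    rw [← MonoidHom.ker_eq_bot_iff, ← normalCore_eq_ker, hcore]
  have := Nat.card_le_card_of_injective _ hinj
  rw [Nat.card_perm] at this
  exact absurd h (not_lt.mpr this)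

end Subgroup

namespace Equiv.Perm

variable {α : Type*} [Fintype α] [DecidableEq α]

theorem alternatingGroup_le_of_relIndex_le_two {K : Subgroup (Perm α)}
    (h : K.relIndex (alternatingGroup α) ≤ 2) : alternatingGroup α ≤ K := by
  set H := K.subgroupOf (alternatingGroup α)
  have hsq : ∀ g, g ^ 2 ∈ H := by
    have h0 : H.index ≠ 0 := index_ne_zero_of_finite
    obtain h1 | h2 : H.index = 1 ∨ H.index = 2 := by change H.index ≤ 2 at h; omega
    · simp [index_eq_one.mp h1]
    · exact sq_mem_of_index_two h2
  rw [← closure_three_cycles_eq_alternating, closure_le]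
  intro f hf
  have hf3 : f ^ 3 = 1 := hf.orderOf ▸ pow_orderOf_eq_one f
  have : (f ^ 2) ^ 2 ∈ K := hsq ⟨f ^ 2, pow_mem hf.mem_alternatingGroup 2⟩
  rwa [← pow_mul, show 2 * 2 = 3 + 1 from rfl, pow_succ, hf3, one_mul] at this

theorem alternatingGroup_le_of_relIndex_lt {K : Subgroup (Perm α)} (h5 : 5 ≤ Nat.card α)
    (h : K.relIndex (alternatingGroup α) < Nat.card α) : alternatingGroup α ≤ K := by
  have : Nontrivial α := Finite.one_lt_card_iff_nontrivial.mp (by omega)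
  have := alternatingGroup.isSimpleGroup h5
  refine subgroupOf_eq_top.mp (eq_top_of_factorial_index_lt (lt_of_mul_lt_mul_left ?_ zero_le_two))
  calc 2 * (K.relIndex (alternatingGroup α))! ≤ 2 * (Nat.card α - 1)! :=
        Nat.mul_le_mul_left 2 (Nat.factorial_le (by omega))
    _ < Nat.card α * (Nat.card α - 1)! :=
        Nat.mul_lt_mul_of_pos_right (by omega) (Nat.factorial_pos _)
    _ = 2 * Nat.card (alternatingGroup α) := by
        rw [Nat.mul_factorial_pred (by omega), two_mul_nat_card_alternatingGroup, Nat.card_perm]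

theorem support_mul_of_card_inter_le_one {σ τ : Perm α} (h : #(σ.support ∩ τ.support) ≤ 1) :
    (σ * τ).support = σ.support ∪ τ.support := by
  refine (support_mul_le σ τ).antisymm fun a ha ↦ mem_support.mpr fun hfix ↦ ?_
  have hτa : τ a = σ⁻¹ a := eq_inv_iff_eq.mpr hfix
  by_cases hσs : a ∈ σ.support
  · by_cases hτs : a ∈ τ.support
    · have hτa_mem : τ a ∈ σ.support ∩ τ.support := by
        refine mem_inter.mpr ⟨?_, apply_mem_support.mpr hτs⟩
        rw [hτa, ← support_inv]
        exact apply_mem_support.mpr (support_inv σ ▸ hσs)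
      exact mem_support.mp hτs (card_le_one.mp h _ hτa_mem a (mem_inter.mpr ⟨hσs, hτs⟩))
    · rw [notMem_support.mp hτs, eq_comm, inv_eq_iff_eq, eq_comm] at hτa
      exact mem_support.mp hσs hτa
  · have hτs : a ∉ τ.support := by
      rw [notMem_support, hτa, inv_eq_iff_eq, eq_comm, ← notMem_support]
      exact hσs
    exact (mem_union.mp ha).elim hσs hτs

theorem isCycle_of_sign_eq_one_of_card_support_eq_five {g : Perm α} (hg : sign g = 1)
    (h5 : #g.support = 5) : g.IsCycle := by
  have hsum : g.cycleType.sum = 5 := by rw [sum_cycleType, h5]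
  have hle : Multiset.card g.cycleType • 2 ≤ 5 :=
    hsum ▸ Multiset.card_nsmul_le_sum fun _ ↦ two_le_of_mem_cycleType
  have heven : Even (5 + Multiset.card g.cycleType) := by
    rwa [sign_of_cycleType, hsum, neg_one_pow_eq_one_iff_even (by decide)] at hg
  -- the only other cycle type with sum `5` and all parts `≥ 2` is `{3, 2}`, which is odd
  rw [← card_cycleType_eq_one]
  obtain ⟨k, hk⟩ := heven
  rw [smul_eq_mul] at hle
  omega

theorem mem_closure_image_ofSubtype {s : Finset α} {S : Set (Perm s)}
    (hS : alternatingGroup s ≤ closure S) {g : Perm α} (hg : g.support ⊆ s)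
    (hgA : g ∈ alternatingGroup α) : g ∈ closure (ofSubtype '' S) := by
  obtain ⟨g', rfl⟩ := mem_range_ofSubtype_iff (p := (· ∈ s)).mpr fun x hx ↦ hg hx
  rw [← MonoidHom.map_closure]
  refine mem_map_of_mem _ (hS ?_)
  rwa [mem_alternatingGroup, ← sign_ofSubtype, ← mem_alternatingGroup]

namespace IsThreeCycle

variable {σ τ : Perm α}

theorem card_support_union_add_card_inter (hσ : σ.IsThreeCycle) (hτ : τ.IsThreeCycle) :
    #(σ.support ∪ τ.support) + #(σ.support ∩ τ.support) = 6 := by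
  rw [card_union_add_card_inter, hσ.card_support, hτ.card_support]

theorem card_support_union_mem (hσ : σ.IsThreeCycle) (hτ : τ.IsThreeCycle)
    (hmeet : (σ.support ∩ τ.support).Nonempty) :
    #(σ.support ∪ τ.support) ∈ ({3, 4, 5} : Set ℕ) := by
  have hsplit := hσ.card_support_union_add_card_inter hτ
  have hpos : 0 < #(σ.support ∩ τ.support) := card_pos.mpr hmeet
  have hle : #(σ.support ∩ τ.support) ≤ 3 := hσ.card_support ▸ card_le_card inter_subset_left
  simp only [Set.mem_insert_iff, Set.mem_singleton_iff]
  omega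

theorem orderOf_mul_eq_five (hσ : σ.IsThreeCycle) (hτ : τ.IsThreeCycle)
    (h1 : #(σ.support ∩ τ.support) = 1) : _root_.orderOf (σ * τ) = 5 := by
  have h5 : #(σ * τ).support = 5 := by
    have := hσ.card_support_union_add_card_inter hτ
    rw [support_mul_of_card_inter_le_one h1.le]
    omega
  have hsign : Perm.sign (σ * τ) = 1 := by rw [map_mul, hσ.sign, hτ.sign, mul_one]
  rw [(isCycle_of_sign_eq_one_of_card_support_eq_five hsign h5).orderOf, h5]

theorem card_closure_pair_ne_three (hσ : σ.IsThreeCycle) (hτσ : ¬τ.support ⊆ σ.support) :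
    Nat.card (closure ({σ, τ} : Set (Perm α))) ≠ 3 := by
  intro hK3
  have hzK : zpowers σ = closure {σ, τ} :=
    eq_of_le_of_card_ge (zpowers_le.mpr (subset_closure (by simp)))
      (by rw [hK3, Nat.card_zpowers, hσ.orderOf])
  obtain ⟨k, rfl⟩ := mem_zpowers_iff.mp (hzK ▸ subset_closure (by simp) : τ ∈ zpowers σ)
  exact hτσ (support_zpow_le σ k)

theorem alternatingGroup_le_closure_pair (hσ : σ.IsThreeCycle) (hτ : τ.IsThreeCycle)
    (hmeet : (σ.support ∩ τ.support).Nonempty) (hcover : σ.support ∪ τ.support = univ) :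
    alternatingGroup α ≤ closure {σ, τ} := by
  set K := closure ({σ, τ} : Set (Perm α))
  have hσK : σ ∈ K := subset_closure (by simp)
  have hτK : τ ∈ K := subset_closure (by simp)
  have hKA : K ≤ alternatingGroup α :=
    (closure_le _).mpr (Set.pair_subset hσ.mem_alternatingGroup hτ.mem_alternatingGroup)
  have hsplit : Nat.card α + #(σ.support ∩ τ.support) = 6 := by
    rw [Nat.card_eq_fintype_card, ← card_univ, ← hcover,
      hσ.card_support_union_add_card_inter hτ]
  have hn : Nat.card α = 3 ∨ Nat.card α = 4 ∨ Nat.card α = 5 := by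
    rw [Nat.card_eq_fintype_card, ← card_univ, ← hcover]
    exact hσ.card_support_union_mem hτ hmeet
  have : Nontrivial α := Finite.one_lt_card_iff_nontrivial.mp (by omega)
  have hindex : Nat.card K * K.relIndex (alternatingGroup α) = (Nat.card α)! / 2 := by
    rw [card_mul_relIndex hKA, nat_card_alternatingGroup]
  have h3 : 3 ∣ Nat.card K := by
    simpa [hσ.orderOf] using orderOf_dvd_natCard (⟨σ, hσK⟩ : K)
  have hKpos : 0 < Nat.card K := Nat.card_pos
  rcases hn with hn | hn | hn
  · have : 3 ≤ Nat.card K := Nat.le_of_dvd hKpos h3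
    rw [hn] at hindex
    exact alternatingGroup_le_of_relIndex_le_two (by norm_num at hindex; nlinarith)
  · have hτσ : ¬τ.support ⊆ σ.support := fun hsub ↦ by
      rw [inter_eq_right.mpr hsub, hτ.card_support] at hsplit
      omega
    have : 6 ≤ Nat.card K := by
      have hne : Nat.card K ≠ 3 := hσ.card_closure_pair_ne_three hτσ
      obtain ⟨k, hk⟩ := h3
      omega
    rw [hn] at hindex
    exact alternatingGroup_le_of_relIndex_le_two (by norm_num at hindex; nlinarith)
  · have h5 : 5 ∣ Nat.card K := by
      simpa [hσ.orderOf_mul_eq_five hτ (by omega)] using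
        orderOf_dvd_natCard (⟨σ * τ, mul_mem hσK hτK⟩ : K)
    have : 15 ≤ Nat.card K :=
      Nat.le_of_dvd hKpos (Nat.Coprime.mul_dvd_of_dvd_of_dvd (by norm_num) h3 h5)
    rw [hn] at hindex
    exact alternatingGroup_le_of_relIndex_lt (by omega) (by norm_num at hindex; nlinarith)

theorem mem_closure_pair (hσ : σ.IsThreeCycle) (hτ : τ.IsThreeCycle)
    (hmeet : (σ.support ∩ τ.support).Nonempty) {g : Perm α}
    (hg : g.support ⊆ σ.support ∪ τ.support) (hgA : g ∈ alternatingGroup α) :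
    g ∈ closure {σ, τ} := by
  obtain ⟨s, hs⟩ : ∃ s, σ.support ∪ τ.support = s := ⟨_, rfl⟩
  rw [hs] at hg
  obtain ⟨σ', rfl⟩ := mem_range_ofSubtype_iff (p := (· ∈ s)).mpr
    (fun x hx ↦ hs ▸ subset_union_left hx)
  obtain ⟨τ', rfl⟩ := mem_range_ofSubtype_iff (p := (· ∈ s)).mpr
    (fun x hx ↦ hs ▸ subset_union_right hx)
  rw [support_ofSubtype, support_ofSubtype] at hs hmeet
  rw [← Set.image_pair]
  refine mem_closure_image_ofSubtype (alternatingGroup_le_closure_pair ?_ ?_ ?_ ?_) hg hgA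
  · rwa [IsThreeCycle, ← cycleType_ofSubtype]
  · rwa [IsThreeCycle, ← cycleType_ofSubtype]
  · rw [← map_inter, map_nonempty] at hmeet
    convert hmeet
  · refine eq_univ_of_forall fun x ↦ ?_
    simpa using (Finset.ext_iff.mp hs x).mpr x.2

end IsThreeCycle

end Equiv.Perm

/-- Two 3-cycles in a symmetric group whose supports intersect generate a
group containing the alternating group on the union of their supports, which has
3, 4 or 5 points. -/
theorem stmt_1 {Ω : Type*} [Fintype Ω] [DecidableEq Ω]
    (σ τ : Equiv.Perm Ω) (hσ : σ.IsThreeCycle) (hτ : τ.IsThreeCycle)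
    (hmeet : (σ.support ∩ τ.support).Nonempty) :
    (∀ g : Equiv.Perm Ω, g.support ⊆ σ.support ∪ τ.support →
        g ∈ alternatingGroup Ω → g ∈ Subgroup.closure ({σ, τ} : Set (Equiv.Perm Ω))) ∧
      (σ.support ∪ τ.support).card ∈ ({3, 4, 5} : Set ℕ) :=
  ⟨fun _ ↦ hσ.mem_closure_pair hτ hmeet, hσ.card_support_union_mem hτ hmeet⟩
end

section
/- Let G be a primitive permutation group on a finite set Ω containing a 3-cycle. Then G contains the alternating group on Ω, i.e., G is the alternating or symmetric group on Ω. -/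
open Pointwise

theorem Subgroup.isPreprimitive_of_trivial_blocks {Ω : Type*}
    (G : Subgroup (Equiv.Perm Ω))
    (htrans : ∀ x y : Ω, ∃ g ∈ G, g x = y)
    (hprim : ∀ B : Set Ω, (∀ g ∈ G, g • B = B ∨ Disjoint (g • B) B) →
      B.Subsingleton ∨ B = Set.univ) :
    MulAction.IsPreprimitive G Ω where
  exists_smul_eq x y := by
    obtain ⟨g, hg, rfl⟩ := htrans x y
    exact ⟨⟨g, hg⟩, rfl⟩
  isTrivialBlock_of_isBlock {B} hB :=
    hprim B fun g hg => MulAction.isBlock_iff_smul_eq_or_disjoint.mp hB ⟨g, hg⟩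

/-- A primitive permutation group on a finite set containing a 3-cycle
contains the alternating group (so it is the alternating or symmetric group).
Primitivity is expressed as: the action is transitive and every block (a set `B` with
`g • B = B` or `g • B` disjoint from `B` for all `g ∈ G`) is trivial. -/
theorem stmt_2 {Ω : Type*} [Fintype Ω] [DecidableEq Ω]
    (G : Subgroup (Equiv.Perm Ω))
    (htrans : ∀ x y : Ω, ∃ g ∈ G, g x = y)
    (hprim : ∀ B : Set Ω, (∀ g ∈ G, g • B = B ∨ Disjoint (g • B) B) →
      B.Subsingleton ∨ B = Set.univ)
    (h : ∃ σ ∈ G, Equiv.Perm.IsThreeCycle σ) :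
    alternatingGroup Ω ≤ G := by
  obtain ⟨σ, hσG, hσ⟩ := h
  exact Equiv.Perm.alternatingGroup_le_of_isPreprimitive_of_isThreeCycle_mem
    (G.isPreprimitive_of_trivial_blocks htrans hprim) hσ hσG
end

section
/- Let G be an intransitive permutation group on a finite set Ω containing a 3-cycle α. Let X be the G-orbit of one of the points moved by α, and let H be the group induced on X by G (the image of the restriction homomorphism). If H contains the alternating group on X, then G itself contains the alternating group on X (viewed as permutations of Ω fixing Ω \ X pointwise). -/
/-!
If `σ` is an even permutation of `X` and `g ∈ G` agrees with `σ` on `X`, then `g` and `σ` differ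
by a permutation fixing `X` pointwise, which commutes with everything supported in `X`. Hence
conjugation by `σ` preserves the subgroup `K` of elements of `G` supported in `X`. The 3-cycle `α`
lies in `K`, and every 3-cycle of `X` is conjugate to `α` or `α⁻¹` by an even permutation of `X`
(an odd conjugator is corrected by the transposition `(a, α a)`, which inverts `α`). So `K`
contains all 3-cycles of `X`, and these generate the alternating group on `X`.
-/

open Equiv Equiv.Perm

namespace Equiv.Perm

section Subtype

variable {α : Type*} {p : α → Prop} [DecidablePred p]

theorem ofSubtype_conj_of_eqOn {σ u : Perm (Subtype p)} {g : Perm α}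
    (hg : ∀ x, p x → g x = ofSubtype σ x) :
    g * ofSubtype u * g⁻¹ = ofSubtype (σ * u * σ⁻¹) := by
  set r := (ofSubtype σ)⁻¹ * g
  have hr : ∀ x, p x → r x = x := fun x hx => by simp [r, hg x hx]
  have hdisj : Disjoint r (ofSubtype u) := fun x => by
    by_cases hx : p x
    · exact Or.inl (hr x hx)
    · exact Or.inr (ofSubtype_apply_of_not_mem u hx)
  have hgr : g = ofSubtype σ * r := by simp [r]
  rw [hgr, mul_inv_rev, mul_assoc (ofSubtype σ), hdisj.commute.eq, map_mul, map_mul, map_inv]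
  group

theorem isThreeCycle_ofSubtype [Fintype α] [DecidableEq α] [Fintype (Subtype p)]
    {g : Perm (Subtype p)} :
    (ofSubtype g).IsThreeCycle ↔ g.IsThreeCycle := by
  simp only [IsThreeCycle, cycleType_ofSubtype]

end Subtype

variable {α : Type*} [Fintype α] [DecidableEq α]

theorem IsThreeCycle.swap_mul_mul_swap_eq_inv {c : Perm α} (hc : c.IsThreeCycle) {a : α}
    (ha : a ∈ c.support) : swap a (c a) * c * swap a (c a) = c⁻¹ := by
  have hc' := hc.eq_swap_mul_swap_iff_mem_support.mpr ha
  -- naming `c a` and `c (c a)` keeps `rw [hc']` from rewriting inside the transpositions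
  set b := c a
  set d := c b
  rw [hc']
  simp only [swap_mul_self_mul, mul_inv_rev, swap_inv]

theorem IsCycle.support_subset_orbit {G : Subgroup (Perm α)} {f : Perm α} (hf : f.IsCycle)
    (hfG : f ∈ G) {a : α} (ha : a ∈ f.support) :
    (f.support : Set α) ⊆ {x | ∃ g ∈ G, g a = x} := fun x hx => by
  obtain ⟨i, hi⟩ := hf.sameCycle (mem_support.mp ha) (mem_support.mp hx)
  exact ⟨f ^ i, zpow_mem hfG i, hi⟩

theorem IsThreeCycle.exists_mem_alternatingGroup_conj {c σ : Perm α} (hc : c.IsThreeCycle)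
    (hσ : σ.IsThreeCycle) :
    ∃ π ∈ alternatingGroup α, π * c * π⁻¹ = σ ∨ π * c⁻¹ * π⁻¹ = σ := by
  obtain ⟨π, hπ⟩ :=
    isConj_iff.mp (isConj_iff_cycleType_eq.mpr (hc.cycleType.trans hσ.cycleType.symm))
  rcases Int.units_eq_one_or (Perm.sign π) with hsign | hsign
  · exact ⟨π, hsign, Or.inl hπ⟩
  obtain ⟨a, ha⟩ := hc.isCycle.nonempty_support
  have hab : a ≠ c a := (mem_support.mp ha).symm
  set s := swap a (c a)
  have hs : s * c * s = c⁻¹ := hc.swap_mul_mul_swap_eq_inv ha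
  refine ⟨π * s, by simp [hsign, s, sign_swap hab], Or.inr ?_⟩
  have hs_inv : s⁻¹ = s := swap_inv _ _
  calc π * s * c⁻¹ * (π * s)⁻¹ = π * (s * c * s⁻¹)⁻¹ * π⁻¹ := by group
    _ = σ := by rw [hs_inv, hs, inv_inv, hπ]

theorem alternatingGroup_le_of_isThreeCycle_mem {K : Subgroup (Perm α)}
    (hK : ∀ π ∈ alternatingGroup α, ∀ k ∈ K, π * k * π⁻¹ ∈ K) {c : Perm α}
    (hc : c.IsThreeCycle) (hcK : c ∈ K) : alternatingGroup α ≤ K := by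
  rw [← closure_three_cycles_eq_alternating, Subgroup.closure_le]
  intro σ hσ
  obtain ⟨π, hπ, rfl | rfl⟩ := hc.exists_mem_alternatingGroup_conj hσ
  · exact hK π hπ c hcK
  · exact hK π hπ c⁻¹ (inv_mem hcK)

theorem alternatingGroup_le_comap_ofSubtype {p : α → Prop} [DecidablePred p]
    (G : Subgroup (Perm α)) {c : Perm (Subtype p)} (hc : c.IsThreeCycle) (hcG : ofSubtype c ∈ G)
    (hext : ∀ σ ∈ alternatingGroup (Subtype p), ∃ g ∈ G, ∀ x, p x → g x = ofSubtype σ x) :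
    alternatingGroup (Subtype p) ≤ G.comap ofSubtype := by
  refine alternatingGroup_le_of_isThreeCycle_mem (fun σ hσ u hu => ?_) hc hcG
  obtain ⟨g, hgG, hg⟩ := hext σ hσ
  rw [Subgroup.mem_comap, ← ofSubtype_conj_of_eqOn hg]
  exact mul_mem (mul_mem hgG hu) (inv_mem hgG)

end Equiv.Perm

theorem stmt_3_general {Ω : Type*} [Fintype Ω] [DecidableEq Ω]
    (G : Subgroup (Equiv.Perm Ω))
    (α : Equiv.Perm Ω) (hα : α ∈ G) (h3 : α.IsThreeCycle)
    (a : Ω) (ha : a ∈ α.support)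
    (X : Set Ω) (hX : X = {x : Ω | ∃ g ∈ G, g a = x})
    (hH : ∀ h : Equiv.Perm Ω, (h.support : Set Ω) ⊆ X → h ∈ alternatingGroup Ω →
        ∃ g ∈ G, ∀ x ∈ X, g x = h x) :
    ∀ h : Equiv.Perm Ω, (h.support : Set Ω) ⊆ X → h ∈ alternatingGroup Ω → h ∈ G := by
  classical
  obtain ⟨c, rfl⟩ := mem_range_ofSubtype_iff (p := (· ∈ X)).mpr
    (hX ▸ h3.isCycle.support_subset_orbit hα ha)
  have hAlt : alternatingGroup X ≤ G.comap (ofSubtype : Perm X →* Perm Ω) :=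
    alternatingGroup_le_comap_ofSubtype G (isThreeCycle_ofSubtype.mp h3) hα fun σ hσ =>
      hH (ofSubtype (p := (· ∈ X)) σ) (mem_range_ofSubtype_iff (p := (· ∈ X)).mp ⟨σ, rfl⟩)
        (by rwa [mem_alternatingGroup, sign_ofSubtype])
  intro h hhX hh
  obtain ⟨h', rfl⟩ := mem_range_ofSubtype_iff (p := (· ∈ X)).mpr hhX
  exact hAlt (by rwa [mem_alternatingGroup, ← sign_ofSubtype])

/-- Let `G` be an intransitive permutation group on a finite set `Ω`
containing a 3-cycle `α`; let `X` be the `G`-orbit of a point moved by `α`, and suppose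
the group `H` induced on `X` by `G` contains the alternating group on `X` (i.e., every
even permutation supported in `X` agrees on `X` with some element of `G`). Then every
even permutation of `Ω` supported in `X` lies in `G`. -/
theorem stmt_3 {Ω : Type*} [Fintype Ω] [DecidableEq Ω]
    (G : Subgroup (Equiv.Perm Ω))
    (hintrans : ¬ (∀ x y : Ω, ∃ g ∈ G, g x = y))
    (α : Equiv.Perm Ω) (hα : α ∈ G) (h3 : α.IsThreeCycle)
    (a : Ω) (ha : a ∈ α.support)
    (X : Set Ω) (hX : X = {x : Ω | ∃ g ∈ G, g a = x})
    (hH : ∀ h : Equiv.Perm Ω, (h.support : Set Ω) ⊆ X → h ∈ alternatingGroup Ω →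
        ∃ g ∈ G, ∀ x ∈ X, g x = h x) :
    ∀ h : Equiv.Perm Ω, (h.support : Set Ω) ⊆ X → h ∈ alternatingGroup Ω → h ∈ G :=
  stmt_3_general G α hα h3 a ha X hX hH
end

section
/- Let Γ = (G, {ρ₀,…,ρ_{r−1}}) be a string group generated by involutions and let Γ* = (G*, {ρ₀τ, ρ₁,…,ρ_{r−1}}) be a sesqui-extension of Γ with respect to ρ₀, where τ is an involution commuting with all of G and τ ∉ G. If the identity element of G can be written as a product of the generators ρᵢ involving an odd number of occurrences of ρ₀, then G* ≅ G × ⟨τ⟩ ≅ G × C₂. -/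
/-!
Since `τ` is central in `G`, a word in the new generators evaluates to the same word in the
old ones times `τ ^ k`, where `k` counts the occurrences of `ρ₀`. A relator of `G` with an odd
number of `ρ₀`'s therefore evaluates to `τ`, so `τ ∈ G*`, and then `G* = G ⟨τ⟩`. As `τ` is a
central involution outside `G`, this product is internal direct, and `⟨τ⟩ ≅ C₂`.
-/

open Subgroup

section SesquiExtension

variable {ι W : Type*} [DecidableEq ι] [Group W]

def sesquiGenerators (ρ : ι → W) (a : ι) (τ : W) : ι → W :=
  fun i => if i = a then ρ a * τ else ρ i

variable {ρ : ι → W} {a : ι} {τ : W}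

theorem list_prod_map_sesquiGenerators (hτ : ∀ i, Commute τ (ρ i)) (l : List ι) :
    (l.map (sesquiGenerators ρ a τ)).prod = (l.map ρ).prod * τ ^ l.count a := by
  induction l with
  | nil => simp
  | cons i l ih =>
    have hτl : Commute τ (l.map ρ).prod :=
      Commute.list_prod_right _ _ fun x hx => by
        obtain ⟨j, -, rfl⟩ := List.mem_map.1 hx
        exact hτ j
    rw [List.map_cons, List.prod_cons, ih, List.map_cons, List.prod_cons]
    by_cases hi : i = a
    · subst hi
      rw [List.count_cons_self, pow_succ', sesquiGenerators, if_pos rfl, mul_assoc,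
        hτl.left_comm, mul_assoc]
    · rw [List.count_cons_of_ne hi, sesquiGenerators, if_neg hi, mul_assoc]

theorem mem_closure_sesquiGenerators_of_odd_count (hτ2 : τ ^ 2 = 1)
    (hτ : ∀ i, Commute τ (ρ i)) {l : List ι} (hl : (l.map ρ).prod = 1) (hodd : Odd (l.count a)) :
    τ ∈ closure (Set.range (sesquiGenerators ρ a τ)) := by
  have hprod : (l.map (sesquiGenerators ρ a τ)).prod = τ := by
    obtain ⟨k, hk⟩ := hodd
    rw [list_prod_map_sesquiGenerators hτ, hl, one_mul, hk, pow_succ, pow_mul, hτ2, one_pow,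
      one_mul]
  have hmem : (l.map (sesquiGenerators ρ a τ)).prod ∈
      closure (Set.range (sesquiGenerators ρ a τ)) := list_prod_mem fun x hx => by
    obtain ⟨i, -, rfl⟩ := List.mem_map.1 hx
    exact subset_closure ⟨i, rfl⟩
  rwa [hprod] at hmem

theorem closure_sesquiGenerators_eq_sup
    (hτ : τ ∈ closure (Set.range (sesquiGenerators ρ a τ))) :
    closure (Set.range (sesquiGenerators ρ a τ)) = closure (Set.range ρ) ⊔ zpowers τ := by
  have hρ : ∀ i, ρ i ∈ closure (Set.range ρ) := fun i => subset_closure ⟨i, rfl⟩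
  apply le_antisymm
  · rw [closure_le]
    rintro - ⟨i, rfl⟩
    unfold sesquiGenerators
    split_ifs
    · exact mul_mem (mem_sup_left (hρ a)) (mem_sup_right (mem_zpowers τ))
    · exact mem_sup_left (hρ i)
  · refine sup_le ?_ (zpowers_le.2 hτ)
    rw [closure_le]
    rintro - ⟨i, rfl⟩
    have hσ : sesquiGenerators ρ a τ i ∈ closure (Set.range (sesquiGenerators ρ a τ)) :=
      subset_closure ⟨i, rfl⟩
    by_cases hi : i = a
    · subst hi
      have hρa : ρ i = sesquiGenerators ρ i τ i * τ⁻¹ := by simp [sesquiGenerators]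
      exact hρa ▸ mul_mem hσ (inv_mem hτ)
    · rwa [sesquiGenerators, if_neg hi] at hσ

end SesquiExtension

namespace Subgroup

variable {W : Type*} [Group W]

noncomputable def prodMulEquivSupOfCommute (G H : Subgroup W)
    (hcomm : ∀ g ∈ G, ∀ h ∈ H, Commute g h) (hdisj : Disjoint G H) : G × H ≃* ↥(G ⊔ H) :=
  have hφ := (MonoidHom.noncommCoprod_injective G.subtype H.subtype
    fun g h => hcomm g g.2 h h.2).2
      ⟨G.subtype_injective, H.subtype_injective, by rwa [G.range_subtype, H.range_subtype]⟩
  (MonoidHom.ofInjective hφ).trans <| MulEquiv.subgroupCongr <|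
    (MonoidHom.noncommCoprod_range _ _ _).trans <| by rw [G.range_subtype, H.range_subtype]

theorem disjoint_zpowers_of_sq_eq_one {G : Subgroup W} {τ : W} (hτ2 : τ ^ 2 = 1) (hτ : τ ∉ G) :
    Disjoint G (zpowers τ) := by
  rw [disjoint_def]
  rintro - hx ⟨n, rfl⟩
  obtain ⟨k, rfl | rfl⟩ := Int.even_or_odd' n
  · dsimp only
    rw [zpow_mul, zpow_two, ← sq, hτ2, one_zpow]
  · dsimp only at hx
    rw [zpow_add_one, zpow_mul, zpow_two, ← sq, hτ2, one_zpow, one_mul] at hx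
    exact absurd hx hτ

noncomputable def zpowersMulEquivZModOrderOf (x : W) :
    zpowers x ≃* Multiplicative (ZMod (orderOf x)) :=
  Nat.card_zpowers x ▸ (zmodCyclicMulEquiv inferInstance).symm

end Subgroup

theorem stmt_4_general {W : Type*} [Group W] {r : ℕ}
    (ρ : Fin (r + 1) → W)
    (τ : W) (hτ2 : τ * τ = 1) (hτ1 : τ ≠ 1)
    (hτnot : τ ∉ Subgroup.closure (Set.range ρ))
    (hτc : ∀ g ∈ Subgroup.closure (Set.range ρ), τ * g = g * τ)
    (hodd : ∃ l : List (Fin (r + 1)), (l.map ρ).prod = 1 ∧ Odd (l.count 0)) :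
    Nonempty
      ((Subgroup.closure (Set.range fun i => if i = 0 then ρ 0 * τ else ρ i)) ≃*
        (Subgroup.closure (Set.range ρ)) × (Subgroup.zpowers τ)) ∧
    Nonempty
      ((Subgroup.closure (Set.range fun i => if i = 0 then ρ 0 * τ else ρ i)) ≃*
        (Subgroup.closure (Set.range ρ)) × Multiplicative (ZMod 2)) := by
  obtain ⟨l, hl, hl_odd⟩ := hodd
  have hsq : τ ^ 2 = 1 := (sq τ).trans hτ2
  have hτρ : ∀ i, Commute τ (ρ i) := fun i => hτc _ (subset_closure ⟨i, rfl⟩)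
  have hsup := closure_sesquiGenerators_eq_sup
    (mem_closure_sesquiGenerators_of_odd_count hsq hτρ hl hl_odd)
  have hcomm : ∀ g ∈ closure (Set.range ρ), ∀ h ∈ zpowers τ, Commute g h := by
    rintro g hg - ⟨n, rfl⟩
    exact (Commute.zpow_left (hτc g hg) n).symm
  let e : closure (Set.range (sesquiGenerators ρ 0 τ)) ≃* closure (Set.range ρ) × zpowers τ :=
    (MulEquiv.subgroupCongr hsup).trans
      (prodMulEquivSupOfCommute _ _ hcomm (disjoint_zpowers_of_sq_eq_one hsq hτnot)).symm
  have horder : orderOf τ = 2 := orderOf_eq_prime hsq hτ1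
  have eτ := zpowersMulEquivZModOrderOf τ
  rw [horder] at eτ
  exact ⟨⟨e⟩, ⟨e.trans (MulEquiv.prodCongr (.refl _) eτ)⟩⟩

/-- Let `Γ = (G, {ρ₀,…,ρ_r})` be a string group generated by involutions and
`Γ* = (G*, {ρ₀τ, ρ₁,…,ρ_r})` its sesqui-extension with respect to `ρ₀`, where `τ` is an
involution commuting with all of `G` and `τ ∉ G`. If the identity of `G` can be written as
a product of the generators with an odd number of occurrences of `ρ₀`, then
`G* ≅ G × ⟨τ⟩ ≅ G × C₂`. -/
theorem stmt_4 {W : Type*} [Group W] {r : ℕ}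
    (ρ : Fin (r + 1) → W)
    (hinv : ∀ i, ρ i * ρ i = 1) (hne : ∀ i, ρ i ≠ 1)
    (hcomm : ∀ i j : Fin (r + 1), 1 < Nat.dist (i : ℕ) (j : ℕ) → ρ i * ρ j = ρ j * ρ i)
    (τ : W) (hτ2 : τ * τ = 1) (hτ1 : τ ≠ 1)
    (hτnot : τ ∉ Subgroup.closure (Set.range ρ))
    (hτc : ∀ g ∈ Subgroup.closure (Set.range ρ), τ * g = g * τ)
    (hodd : ∃ l : List (Fin (r + 1)), (l.map ρ).prod = 1 ∧ Odd (l.count 0)) :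
    Nonempty
      ((Subgroup.closure (Set.range fun i => if i = 0 then ρ 0 * τ else ρ i)) ≃*
        (Subgroup.closure (Set.range ρ)) × (Subgroup.zpowers τ)) ∧
    Nonempty
      ((Subgroup.closure (Set.range fun i => if i = 0 then ρ 0 * τ else ρ i)) ≃*
        (Subgroup.closure (Set.range ρ)) × Multiplicative (ZMod 2)) :=
  stmt_4_general ρ τ hτ2 hτ1 hτnot hτc hodd
end

section
/- Let G ≤ Sym(Ω) be a finite permutation group generated by involutions ρ₀,…,ρ_{r−1}, where ρ₀ is an odd permutation and ρ₁,…,ρ_{r−1} are even permutations. Let τ be an odd involution in a larger symmetric group, commuting with all of G and with τ ∉ G. Then the group G* generated by ρ₀τ, ρ₁,…,ρ_{r−1} is isomorphic to G. -/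
/-!
Write `t g := τ ^ parity(g)`, i.e. `1` for even `g` and `τ` for odd `g`. Since `τ` is a central
involution of `G`, the twisted map `g ↦ g * t g` is a homomorphism on `G`. It is injective because
its kernel could only contain `τ`, which is not in `G`, and it sends the generators `ρ₀, ρ₁, …` of
`G` to the generators `ρ₀τ, ρ₁, …` of `G*`, so its image is `G*`.
-/

open Subgroup

section Twist

variable {M : Type*} [Group M]

def unitsIntHomOfMulSelf (τ : M) (hτ : τ * τ = 1) : ℤˣ →* M where
  toFun u := if u = 1 then 1 else τ
  map_one' := if_pos rfl
  map_mul' u v := by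
    rcases Int.units_eq_one_or u with rfl | rfl <;>
      rcases Int.units_eq_one_or v with rfl | rfl <;> simp [hτ]

@[simp]
lemma unitsIntHomOfMulSelf_neg_one (τ : M) (hτ : τ * τ = 1) :
    unitsIntHomOfMulSelf τ hτ (-1) = τ :=
  if_neg (show (-1 : ℤˣ) ≠ 1 by decide) (t := (1 : M))

lemma unitsIntHomOfMulSelf_eq_one_or (τ : M) (hτ : τ * τ = 1) (u : ℤˣ) :
    unitsIntHomOfMulSelf τ hτ u = 1 ∨ unitsIntHomOfMulSelf τ hτ u = τ := by
  rcases Int.units_eq_one_or u with rfl | rfl <;> simp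

def Subgroup.twistHom (G : Subgroup M) (t : M →* M) (ht : ∀ x, ∀ g ∈ G, Commute (t x) g) :
    G →* M where
  toFun g := g * t g
  map_one' := by simp
  map_mul' a b := by
    simp only [Subgroup.coe_mul, map_mul]
    rw [mul_assoc, mul_assoc, ← mul_assoc (t a), (ht a b b.2).eq, mul_assoc]

lemma Subgroup.twistHom_injective (G : Subgroup M) (t : M →* M)
    (ht : ∀ x, ∀ g ∈ G, Commute (t x) g) (hG : ∀ x, t x ∈ G → t x = 1) :
    Function.Injective (G.twistHom t ht) := by
  rw [injective_iff_map_eq_one]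
  intro g hg
  have hinv : t g = (g : M)⁻¹ := eq_inv_of_mul_eq_one_right hg
  have htg : t g = 1 := hG g (hinv ▸ inv_mem g.2)
  exact Subtype.ext (by simpa [htg] using hinv)

lemma Subgroup.range_twistHom_closure (S : Set M) (t : M →* M)
    (ht : ∀ x, ∀ g ∈ closure S, Commute (t x) g) :
    ((closure S).twistHom t ht).range = closure ((fun s => s * t s) '' S) := by
  rw [MonoidHom.range_eq_map, ← closure_closure_coe_preimage, MonoidHom.map_closure]
  congr 1
  change ((fun s => s * t s) ∘ Subtype.val) '' _ = _
  rw [Set.image_comp, Set.image_preimage_eq_of_subset (by simp [subset_closure])]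

end Twist

theorem stmt_5_general {β : Type*} [Fintype β] [DecidableEq β] {r : ℕ}
    (ρ : Fin (r + 1) → Equiv.Perm β)
    (hsign0 : Equiv.Perm.sign (ρ 0) = -1)
    (hsign : ∀ i, i ≠ 0 → Equiv.Perm.sign (ρ i) = 1)
    (τ : Equiv.Perm β) (hτ2 : τ * τ = 1)
    (hτnot : τ ∉ Subgroup.closure (Set.range ρ))
    (hτc : ∀ g ∈ Subgroup.closure (Set.range ρ), τ * g = g * τ) :
    Nonempty
      ((Subgroup.closure (Set.range fun i => if i = 0 then ρ 0 * τ else ρ i)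
          : Subgroup (Equiv.Perm β)) ≃*
        (Subgroup.closure (Set.range ρ) : Subgroup (Equiv.Perm β))) := by
  set t := (unitsIntHomOfMulSelf τ hτ2).comp (Equiv.Perm.sign : Equiv.Perm β →* ℤˣ)
  have ht : ∀ x, ∀ g ∈ closure (Set.range ρ), Commute (t x) g := fun x g hg => by
    rcases unitsIntHomOfMulSelf_eq_one_or τ hτ2 (Equiv.Perm.sign x) with h | h
    · simp [t, h]
    · simpa [t, h, Commute, SemiconjBy] using hτc g hg
  have hinj := (closure (Set.range ρ)).twistHom_injective t ht fun x hx => by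
    rcases unitsIntHomOfMulSelf_eq_one_or τ hτ2 (Equiv.Perm.sign x) with h | h
    · exact h
    · exact absurd (h ▸ hx) hτnot
  have hgen : (fun s => s * t s) '' Set.range ρ =
      Set.range fun i => if i = 0 then ρ 0 * τ else ρ i := by
    rw [← Set.range_comp]
    congr 1
    funext i
    by_cases hi : i = 0
    · subst hi; simp [t, hsign0]
    · simp [t, hsign i hi, hi]
  have hrange := range_twistHom_closure (Set.range ρ) t ht
  rw [hgen] at hrange
  exact ⟨((MonoidHom.ofInjective hinj).trans (MulEquiv.subgroupCongr hrange)).symm⟩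

/-- Let `G ≤ Sym(β)` be generated by involutions `ρ₀,…,ρ_r` with `ρ₀` odd
and the others even, and let `τ` be an odd involution commuting with all of `G`, `τ ∉ G`.
Then the sesqui-extension `G* = ⟨ρ₀τ, ρ₁,…,ρ_r⟩` is isomorphic to `G`. -/
theorem stmt_5 {β : Type*} [Fintype β] [DecidableEq β] {r : ℕ}
    (ρ : Fin (r + 1) → Equiv.Perm β)
    (hinv : ∀ i, ρ i * ρ i = 1) (hne : ∀ i, ρ i ≠ 1)
    (hsign0 : Equiv.Perm.sign (ρ 0) = -1)
    (hsign : ∀ i, i ≠ 0 → Equiv.Perm.sign (ρ i) = 1)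
    (τ : Equiv.Perm β) (hτ2 : τ * τ = 1) (hτ1 : τ ≠ 1)
    (hτsign : Equiv.Perm.sign τ = -1)
    (hτnot : τ ∉ Subgroup.closure (Set.range ρ))
    (hτc : ∀ g ∈ Subgroup.closure (Set.range ρ), τ * g = g * τ) :
    Nonempty
      ((Subgroup.closure (Set.range fun i => if i = 0 then ρ 0 * τ else ρ i)
          : Subgroup (Equiv.Perm β)) ≃*
        (Subgroup.closure (Set.range ρ) : Subgroup (Equiv.Perm β))) :=
  stmt_5_general ρ hsign0 hsign τ hτ2 hτnot hτc
end

section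
/- Any sesqui-extension of a string group generated by involutions whose group is an alternating group Aₙ (n ≥ 3) is proper, i.e., the resulting group is isomorphic to C₂ × Aₙ. -/
/-!
Let `G = ⟨ρ i⟩` and `H = ⟨ρ' i⟩`, where `ρ' k = ρ k τ` and `ρ' i = ρ i` otherwise. Since `τ` is a
central involution outside `G`, the group `⟨τ⟩ ⊔ G` is the internal direct product `⟨τ⟩ × G` and
contains `H`; pulled back to `⟨τ⟩ × G`, `H` surjects onto `G`. For `g ∈ G` of odd order pick
`(t, g)` in this pull-back: its `orderOf g`-th power is `(t, 1)`, hence `(1, g)` lies in it too.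
As `Aₙ` is generated by its `3`-cycles, `G ≤ H`, so `τ = ρ k⁻¹ (ρ k τ) ∈ H` and `H = ⟨τ⟩ × G`.
-/

open Subgroup

section OddOrderGenerated

variable {G G' : Type*} [Group G] [Group G']

theorem Subgroup.mk_one_mem_of_map_snd_eq_top {A : Type*} [Group A] {S : Subgroup (A × G)}
    (hA : ∀ a : A, a ^ 2 = 1) (hG : closure {g : G | Odd (orderOf g)} = ⊤)
    (hS : S.map (MonoidHom.snd A G) = ⊤) (g : G) : ((1 : A), g) ∈ S := by
  suffices closure {g : G | Odd (orderOf g)} ≤ S.comap (MonoidHom.inr A G) from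
    this (hG ▸ mem_top g)
  rw [closure_le]
  intro g hg
  obtain ⟨⟨a, g⟩, hmem, rfl⟩ := mem_map.1 (hS ▸ mem_top g)
  obtain ⟨m, hm⟩ : Odd (orderOf g) := hg
  have hpow : ((a, g) : A × G) ^ orderOf g = (a, 1) := by
    rw [Prod.pow_mk, pow_orderOf_eq_one, hm, pow_succ, pow_mul, hA, one_pow, one_mul]
  have hquot : ((a, g) : A × G) * (a, 1)⁻¹ = (1, g) := by simp
  show ((1 : A), g) ∈ S
  rw [← hquot]
  exact S.mul_mem hmem (S.inv_mem (hpow ▸ S.pow_mem hmem _))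

theorem MulEquiv.closure_setOf_odd_orderOf_eq_top (e : G ≃* G')
    (h : closure {g : G' | Odd (orderOf g)} = ⊤) : closure {g : G | Odd (orderOf g)} = ⊤ := by
  have hle : closure {g : G' | Odd (orderOf g)} ≤
      (closure {g : G | Odd (orderOf g)}).comap e.symm.toMonoidHom :=
    (closure_le _).2 fun g hg => subset_closure (by simpa [MulEquiv.orderOf_eq] using hg)
  exact eq_top_iff.2 fun g _ => e.symm_apply_apply g ▸ hle (h ▸ mem_top (e g))

theorem alternatingGroup.closure_setOf_odd_orderOf {α : Type*} [Fintype α] [DecidableEq α] :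
    closure {g : alternatingGroup α | Odd (orderOf g)} = ⊤ := by
  refine map_injective (alternatingGroup α).subtype_injective ?_
  rw [MonoidHom.map_closure, ← MonoidHom.range_eq_map, range_subtype]
  refine le_antisymm ((closure_le _).2 fun _ ⟨g, _, hg⟩ => hg ▸ g.2) ?_
  refine Equiv.Perm.closure_three_cycles_eq_alternating.ge.trans <|
    closure_mono fun σ hσ => ⟨⟨σ, hσ.mem_alternatingGroup⟩, ?_, rfl⟩
  rw [Set.mem_ofPred_eq, orderOf_mk, hσ.orderOf]
  decide

end OddOrderGenerated

section ZPowersProd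

variable {W : Type*} [Group W] {τ : W} {G : Subgroup W}

def zpowersProdHom (hτG : ∀ g ∈ G, Commute τ g) : zpowers τ × G →* W :=
  (zpowers τ).subtype.noncommCoprod G.subtype fun ⟨_, n, hn⟩ g => hn ▸ (hτG g g.2).zpow_left n

theorem range_zpowersProdHom (hτG : ∀ g ∈ G, Commute τ g) :
    (zpowersProdHom hτG).range = zpowers τ ⊔ G := by
  rw [zpowersProdHom, MonoidHom.noncommCoprod_range, range_subtype, range_subtype]

theorem sq_eq_one_of_mem_zpowers (hτ : τ ^ 2 = 1) {x : W} (hx : x ∈ zpowers τ) : x ^ 2 = 1 := by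
  obtain ⟨n, rfl⟩ := hx
  rw [← zpow_natCast, ← zpow_mul, mul_comm, zpow_mul, zpow_natCast, hτ, one_zpow]

theorem disjoint_zpowers_of_sq_eq_one (hτ : τ ^ 2 = 1) (hτG : τ ∉ G) : Disjoint (zpowers τ) G := by
  rw [disjoint_def]
  rintro _ ⟨n, rfl⟩ hn
  dsimp only at hn ⊢
  rw [zpow_eq_zpow_emod' n hτ] at hn ⊢
  rcases Int.emod_two_eq_zero_or_one n with h | h <;>
    simp only [Nat.cast_ofNat, h, zpow_zero, zpow_one] at hn ⊢
  exact absurd hn hτG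

theorem injective_zpowersProdHom (hτG : ∀ g ∈ G, Commute τ g) (hτ : τ ^ 2 = 1) (hτnot : τ ∉ G) :
    Function.Injective (zpowersProdHom hτG) := by
  refine (MonoidHom.noncommCoprod_injective _ _ _).2
    ⟨subtype_injective _, subtype_injective _, ?_⟩
  rw [range_subtype, range_subtype]
  exact disjoint_zpowers_of_sq_eq_one hτ hτnot

end ZPowersProd

section Sesqui

variable {W ι : Type*} [Group W] [DecidableEq ι]

def sesquiExtension (ρ : ι → W) (k : ι) (τ : W) : ι → W :=
  fun i => if i = k then ρ i * τ else ρ i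

theorem closure_sesquiExtension (ρ : ι → W) (k : ι) {τ : W} (hτ : τ ^ 2 = 1)
    (hτG : ∀ g ∈ closure (Set.range ρ), Commute τ g)
    (hodd : closure {g : closure (Set.range ρ) | Odd (orderOf g)} = ⊤) :
    closure (Set.range (sesquiExtension ρ k τ)) = zpowers τ ⊔ closure (Set.range ρ) := by
  set G := closure (Set.range ρ)
  set H := closure (Set.range (sesquiExtension ρ k τ))
  have hρG (i : ι) : ρ i ∈ G := subset_closure ⟨i, rfl⟩
  have hρ'H (i : ι) : sesquiExtension ρ k τ i ∈ H := subset_closure ⟨i, rfl⟩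
  refine le_antisymm ((closure_le _).2 ?_) ?_
  · rintro _ ⟨i, rfl⟩
    unfold sesquiExtension
    split_ifs
    · exact mul_mem (mem_sup_right (hρG i)) (mem_sup_left (mem_zpowers τ))
    · exact mem_sup_right (hρG i)
  set f := zpowersProdHom hτG
  have hsurj : (H.comap f).map (MonoidHom.snd _ G) = ⊤ := by
    rw [eq_top_iff, ← closure_closure_coe_preimage (k := Set.range ρ), closure_le]
    rintro g ⟨i, hi⟩
    by_cases hik : i = k
    · refine ⟨(⟨τ, mem_zpowers τ⟩, g), ?_, rfl⟩
      have := hρ'H i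
      rw [sesquiExtension, if_pos hik, hi, ← (hτG g g.2).eq] at this
      exact this
    · refine ⟨(1, g), ?_, rfl⟩
      have := hρ'H i
      rw [sesquiExtension, if_neg hik, hi] at this
      simpa [f, zpowersProdHom] using this
  have hGH : G ≤ H := fun g hg => by
    simpa [f, zpowersProdHom] using
      mk_one_mem_of_map_snd_eq_top
        (fun t => Subtype.ext (sq_eq_one_of_mem_zpowers hτ t.2)) hodd hsurj ⟨g, hg⟩
  have hτH : τ ∈ H := by
    have := hρ'H k
    rw [sesquiExtension, if_pos rfl] at this
    simpa using H.mul_mem (H.inv_mem (hGH (hρG k))) this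
  exact sup_le (zpowers_le.2 hτH) hGH

end Sesqui

theorem stmt_6_general {W : Type*} [Group W] {r n : ℕ}
    (ρ : Fin (r + 1) → W)
    (hG : Nonempty ((Subgroup.closure (Set.range ρ)) ≃* alternatingGroup (Fin n)))
    (k : Fin (r + 1))
    (τ : W) (hτ2 : τ * τ = 1) (hτ1 : τ ≠ 1)
    (hτnot : τ ∉ Subgroup.closure (Set.range ρ))
    (hτc : ∀ g ∈ Subgroup.closure (Set.range ρ), τ * g = g * τ) :
    Nonempty
      ((Subgroup.closure (Set.range fun i => if i = k then ρ i * τ else ρ i)) ≃*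
        Multiplicative (ZMod 2) × alternatingGroup (Fin n)) := by
  obtain ⟨e⟩ := hG
  have hτG : ∀ g ∈ closure (Set.range ρ), Commute τ g := hτc
  have hτ : τ ^ 2 = 1 := (sq τ).trans hτ2
  have hodd := e.closure_setOf_odd_orderOf_eq_top alternatingGroup.closure_setOf_odd_orderOf
  have hH : closure (Set.range (sesquiExtension ρ k τ)) = (zpowersProdHom hτG).range := by
    rw [range_zpowersProdHom, closure_sesquiExtension ρ k hτ hτG hodd]
  have hC2 : Multiplicative (ZMod 2) ≃* zpowers τ := mulEquivOfPrimeCardEq (by simp)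
    ((Nat.card_zpowers τ).trans (orderOf_eq_prime hτ hτ1))
  exact ⟨(MulEquiv.subgroupCongr hH).trans
    ((MonoidHom.ofInjective (injective_zpowersProdHom hτG hτ hτnot)).symm.trans
      (hC2.symm.prodCongr e))⟩

/-- Any sesqui-extension of a string group generated by involutions whose
group is an alternating group `Aₙ` (`n ≥ 3`) is proper: the resulting group is isomorphic
to `C₂ × Aₙ`. -/
theorem stmt_6 {W : Type*} [Group W] {r n : ℕ} (hn : 3 ≤ n)
    (ρ : Fin (r + 1) → W)
    (hinv : ∀ i, ρ i * ρ i = 1) (hne : ∀ i, ρ i ≠ 1)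
    (hcomm : ∀ i j : Fin (r + 1), 1 < Nat.dist (i : ℕ) (j : ℕ) → ρ i * ρ j = ρ j * ρ i)
    (hG : Nonempty ((Subgroup.closure (Set.range ρ)) ≃* alternatingGroup (Fin n)))
    (k : Fin (r + 1))
    (τ : W) (hτ2 : τ * τ = 1) (hτ1 : τ ≠ 1)
    (hτnot : τ ∉ Subgroup.closure (Set.range ρ))
    (hτc : ∀ g ∈ Subgroup.closure (Set.range ρ), τ * g = g * τ) :
    Nonempty
      ((Subgroup.closure (Set.range fun i => if i = k then ρ i * τ else ρ i)) ≃*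
        Multiplicative (ZMod 2) × alternatingGroup (Fin n)) :=
  stmt_6_general ρ hG k τ hτ2 hτ1 hτnot hτc
end

section
/- Let Γ = (G, {ρ₀,…,ρ_{r−1}}) be a string group generated by involutions acting faithfully on {1,…,n}, transitive, and possessing a perfect i-split {a,b}. Then the group G* of its rank-and-degree extension Γ^{i↑}, acting on {1,…,n} ∪ {c}, contains the alternating group A_{n+1}. -/
/-! Write `c = none`, `A = optionCongr α`, `B = optionCongr β`. As `α` and `β` fix `a` and `b`,
the new generators multiply to `δ₁δ₂ = AB · (c a)(c b)`: the involution `AB` (because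
`(αβ)² = ρᵢ² = 1`) times a commuting 3-cycle. Its cube `AB` and its fourth power `(c a)(c b)` lie
in `G*`, and so does `δ₂ · (c a)(c b) = B · (a b)`. Thus the stabiliser of `c` in `G*` contains
the lifts of `ρⱼ` (`j ≠ i`), `αβ` and `β (a b)`, and every `ρⱼ`, `ρᵢ` included, keeps each point
in its orbit under this stabiliser; transitivity of `Γ` makes the stabiliser transitive on `Ω`.
So `G*` is 2-transitive, hence primitive, and Jordan's theorem applies to the 3-cycle. -/

open Equiv MulAction

theorem Commute.mem_and_mem_of_mul_mem {G : Type*} [Group G] {H : Subgroup G} {x y : G}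
    (hxy : Commute x y) (hx : x ^ 2 = 1) (hy : y ^ 3 = 1) (h : x * y ∈ H) :
    x ∈ H ∧ y ∈ H := by
  have h3 : (x * y) ^ 3 = x := by
    rw [hxy.mul_pow, hy, mul_one, pow_succ, hx, one_mul]
  have h4 : (x * y) ^ 4 = y := by
    rw [hxy.mul_pow, pow_succ y, hy, one_mul, show x ^ 4 = (x ^ 2) ^ 2 by rw [← pow_mul], hx,
      one_pow, one_mul]
  exact ⟨h3 ▸ H.pow_mem h 3, h4 ▸ H.pow_mem h 4⟩

theorem Equiv.swap_mul_swap_pow_three {α : Type*} [DecidableEq α] {x y z : α} (hxy : x ≠ y)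
    (hxz : x ≠ z) : (swap x y * swap x z) ^ 3 = 1 := by
  rcases eq_or_ne y z with rfl | hyz
  · rw [swap_mul_self, one_pow]
  have h₁ : swap x y * swap x z * swap x y = swap y z := by
    simpa only [swap_comm z x] using swap_mul_swap_mul_swap hxz.symm hyz.symm
  have h₂ : swap x z * swap x y * swap x z = swap z y := by
    simpa only [swap_comm y x] using swap_mul_swap_mul_swap hxy.symm hyz
  calc (swap x y * swap x z) ^ 3
      = (swap x y * swap x z * swap x y) * (swap x z * swap x y * swap x z) := by
        simp only [pow_three, mul_assoc]
    _ = 1 := by rw [h₁, h₂, swap_comm z y, swap_mul_self]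

namespace MulAction

variable {G α : Type*} [Group G] [MulAction G α]

theorem smul_mem_orbit_of_mem_closure (K : Subgroup G) {S : Set G}
    (hS : ∀ s ∈ S, ∀ x : α, s • x ∈ orbit K x) {g : G} (hg : g ∈ Subgroup.closure S)
    (x : α) : g • x ∈ orbit K x := by
  induction hg using Subgroup.closure_induction generalizing x with
  | mem s hs => exact hS s hs x
  | one => rw [one_smul]; exact mem_orbit_self x
  | mul g h _ _ ihg ihh => rw [mul_smul, ← orbit_eq_iff.mpr (ihh x)]; exact ihg (h • x)
  | inv g _ ih => simpa using mem_orbit_symm.mp (ih (g⁻¹ • x))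

theorem is_two_pretransitive_of_stabilizer_pretransitive (p : α) (hmove : ∃ g : G, g • p ≠ p)
    (hfix : ∀ x y, x ≠ p → y ≠ p → ∃ g : G, g • p = p ∧ g • x = y) :
    IsMultiplyPretransitive G α 2 := by
  have hto : ∀ x, ∃ g : G, g • x = p := by
    intro x
    by_cases hx : x = p
    · exact ⟨1, by rw [hx, one_smul]⟩
    obtain ⟨g, hg⟩ := hmove
    obtain ⟨k, -, hk⟩ := hfix x (g • p) hx hg
    exact ⟨g⁻¹ * k, by rw [mul_smul, hk, inv_smul_smul]⟩
  rw [is_two_pretransitive_iff]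
  intro u v u' v' huv hu'v'
  obtain ⟨h, hh⟩ := hto u
  obtain ⟨h', hh'⟩ := hto u'
  obtain ⟨k, hkp, hk⟩ := hfix (h • v) (h' • v')
    (hh ▸ (smul_left_cancel_iff h).not.mpr huv.symm)
    (hh' ▸ (smul_left_cancel_iff h').not.mpr hu'v'.symm)
  refine ⟨h'⁻¹ * k * h, ?_, ?_⟩
  · rw [mul_smul, mul_smul, hh, hkp, ← hh', inv_smul_smul]
  · rw [mul_smul, mul_smul, hk, inv_smul_smul]

end MulAction

namespace Equiv.Perm

variable {Ω : Type*}

def optionCongrHom : Perm Ω →* Perm (Option Ω) where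
  toFun := optionCongr
  map_one' := optionCongr_one
  map_mul' σ τ := optionCongr_trans τ σ

@[simp]
theorem optionCongrHom_apply (σ : Perm Ω) : optionCongrHom σ = optionCongr σ := rfl

theorem optionCongr_mul (σ τ : Perm Ω) :
    optionCongr (σ * τ) = optionCongr σ * optionCongr τ :=
  map_mul optionCongrHom σ τ

theorem apply_eq_self_of_support_subset [DecidableEq Ω] [Fintype Ω] {σ : Perm Ω} {s : Set Ω}
    {x : Ω} (hσ : (σ.support : Set Ω) ⊆ s) (hx : x ∉ s) : σ x = x :=
  notMem_support.mp fun h => hx (hσ h)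

theorem commute_swap_of_apply_eq [DecidableEq Ω] {f : Perm Ω} {x y : Ω} (hx : f x = x)
    (hy : f y = y) : Commute f (swap x y) := by
  rw [Commute, SemiconjBy, mul_swap_eq_swap_mul, hx, hy]

theorem optionCongr_commute_swap_none [DecidableEq Ω] {σ : Perm Ω} {x : Ω} (hx : σ x = x) :
    Commute (optionCongr σ) (swap none (some x)) :=
  commute_swap_of_apply_eq rfl (by simp [hx])

theorem isPreprimitive_of_isPretransitive_comap_optionCongrHom {H : Subgroup (Perm (Option Ω))}
    (hK : IsPretransitive (H.comap optionCongrHom) Ω) (hmove : ∃ g ∈ H, g none ≠ none) :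
    IsPreprimitive H (Option Ω) := by
  apply isPreprimitive_of_is_two_pretransitive
  apply is_two_pretransitive_of_stabilizer_pretransitive none
  · obtain ⟨g, hg, hne⟩ := hmove
    exact ⟨⟨g, hg⟩, hne⟩
  · rintro (_ | x) (_ | y) hx hy
    iterate 3 contradiction
    obtain ⟨⟨g, hg⟩, hgxy⟩ := hK.exists_smul_eq x y
    exact ⟨⟨optionCongr g, hg⟩, rfl, by simpa [Subgroup.smul_def] using hgxy⟩

theorem isPretransitive_comap_optionCongrHom {H : Subgroup (Perm (Option Ω))} {r i : ℕ}
    {ρ : ℕ → Perm Ω}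
    (htriv : ∀ j, r ≤ j → ρ j = 1)
    (htrans : ∀ x y : Ω, ∃ g ∈ Subgroup.closure (Set.range ρ), g x = y)
    (hρ : ∀ j < r, j ≠ i → optionCongr (ρ j) ∈ H)
    (hρi : ∀ x, ρ i x ∈ orbit (H.comap optionCongrHom) x) :
    IsPretransitive (H.comap optionCongrHom) Ω := by
  refine ⟨fun x y => ?_⟩
  obtain ⟨g, hg, rfl⟩ := htrans x y
  refine mem_orbit_iff.mp (smul_mem_orbit_of_mem_closure _ ?_ hg x)
  rintro _ ⟨j, rfl⟩ z
  rcases le_or_gt r j with hjr | hjr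
  · rw [htriv j hjr, one_smul]
    exact mem_orbit_self z
  rcases eq_or_ne j i with rfl | hji
  · exact hρi z
  · exact ⟨⟨ρ j, hρ j hjr hji⟩, rfl⟩

section RDExtension

variable [DecidableEq Ω] {H : Subgroup (Perm (Option Ω))} {α β : Perm Ω} {a b : Ω}

theorem optionCongr_mul_mem_and_swap_mul_swap_mem (hαa : α a = a) (hαb : α b = b)
    (hβa : β a = a) (hβb : β b = b) (hαβ : (α * β) ^ 2 = 1)
    (hδ₁ : optionCongr α * swap (some a) none ∈ H)
    (hδ₂ : optionCongr β * swap none (some b) ∈ H) :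
    optionCongr (α * β) ∈ H ∧ swap none (some a) * swap none (some b) ∈ H := by
  have hAa := optionCongr_commute_swap_none hαa
  have hAb := optionCongr_commute_swap_none hαb
  have hBa := optionCongr_commute_swap_none hβa
  have hBb := optionCongr_commute_swap_none hβb
  refine Commute.mem_and_mem_of_mul_mem ?_ ?_ (swap_mul_swap_pow_three (by simp) (by simp)) ?_
  · rw [optionCongr_mul]
    exact (hAa.mul_left hBa).mul_right (hAb.mul_left hBb)
  · rw [← optionCongrHom_apply, ← map_pow, hαβ, map_one]
  · rw [swap_comm] at hδ₁
    rw [optionCongr_mul, ← hBa.symm.mul_mul_mul_comm]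
    exact mul_mem hδ₁ hδ₂

theorem apply_mem_orbit_comap_optionCongrHom (hab : a ≠ b) (hαa : α a = a) (hαb : α b = b)
    (hβa : β a = a) (hβb : β b = b) (hαβ : optionCongr (α * β) ∈ H)
    (hδ₂ : optionCongr β * swap none (some b) ∈ H)
    (hcycle : swap none (some a) * swap none (some b) ∈ H) (x : Ω) :
    (α * β * swap a b) x ∈ orbit (H.comap optionCongrHom) x := by
  have hβab : optionCongr (β * swap b a) ∈ H := by
    have h := swap_mul_swap_mul_swap (Option.some_ne_none a) (Option.some_injective _ |>.ne hab)
    rw [swap_comm (some a)] at h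
    rw [optionCongr_mul, optionCongr_swap, ← h, mul_assoc (swap none (some b)), ← mul_assoc]
    exact mul_mem hδ₂ hcycle
  rcases eq_or_ne x a with rfl | hxa
  · exact ⟨⟨_, hβab⟩, by simp [Subgroup.smul_def, hαb, hβb]⟩
  rcases eq_or_ne x b with rfl | hxb
  · exact ⟨⟨_, hβab⟩, by simp [Subgroup.smul_def, hαa, hβa]⟩
  · exact ⟨⟨_, hαβ⟩, by simp [Subgroup.smul_def, swap_apply_of_ne_of_ne hxa hxb]⟩

end RDExtension

end Equiv.Perm

theorem stmt_8_general {Ω : Type*} [Fintype Ω] [DecidableEq Ω] {r i : ℕ}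
    (ρ : ℕ → Equiv.Perm Ω)
    (hir : i < r)
    (htriv : ∀ j, r ≤ j → ρ j = 1)
    (hinv : ∀ j < r, ρ j * ρ j = 1 ∧ ρ j ≠ 1)
    (htrans : ∀ x y : Ω, ∃ g ∈ Subgroup.closure (Set.range ρ), g x = y)
    (O₁ O₂ : Set Ω) (a b : Ω)
    (hdisj : Disjoint O₁ O₂)
    (ha : a ∈ O₁) (hb : b ∈ O₂)
    (α β : Equiv.Perm Ω)
    (hρi : ρ i = α * β * Equiv.swap a b)
    (hαs : (α.support : Set Ω) ⊆ O₁ \ {a})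
    (hβs : (β.support : Set Ω) ⊆ O₂ \ {b}) :
    alternatingGroup (Option Ω) ≤
      Subgroup.closure
        ((fun σ : Equiv.Perm Ω => Equiv.optionCongr σ) '' (ρ '' {j | j < r ∧ j ≠ i}) ∪
          {Equiv.optionCongr α * Equiv.swap (some a) none,
           Equiv.optionCongr β * Equiv.swap none (some b)}) := by
  set H := Subgroup.closure
    ((fun σ : Equiv.Perm Ω => Equiv.optionCongr σ) '' (ρ '' {j | j < r ∧ j ≠ i}) ∪
      {Equiv.optionCongr α * Equiv.swap (some a) none,
       Equiv.optionCongr β * Equiv.swap none (some b)})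
  have hab : a ≠ b := fun h => Set.disjoint_left.mp hdisj ha (h ▸ hb)
  have hαa : α a = a := Perm.apply_eq_self_of_support_subset hαs (by simp)
  have hαb : α b = b :=
    Perm.apply_eq_self_of_support_subset hαs fun h => Set.disjoint_left.mp hdisj h.1 hb
  have hβa : β a = a :=
    Perm.apply_eq_self_of_support_subset hβs fun h => Set.disjoint_left.mp hdisj ha h.1
  have hβb : β b = b := Perm.apply_eq_self_of_support_subset hβs (by simp)
  have hαβ : (α * β) ^ 2 = 1 := by
    have h := (hinv i hir).1
    rwa [← sq, hρi, (Perm.commute_swap_of_apply_eq (by simp [hαa, hβa])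
      (by simp [hαb, hβb])).mul_pow, sq (swap a b), swap_mul_self, mul_one] at h
  have hδ₁ : optionCongr α * swap (some a) none ∈ H :=
    Subgroup.subset_closure (Or.inr (Set.mem_insert _ _))
  have hδ₂ : optionCongr β * swap none (some b) ∈ H :=
    Subgroup.subset_closure (Or.inr (Set.mem_insert_of_mem _ rfl))
  obtain ⟨hαβH, hcycle⟩ :=
    Perm.optionCongr_mul_mem_and_swap_mul_swap_mem hαa hαb hβa hβb hαβ hδ₁ hδ₂
  have hK := Perm.isPretransitive_comap_optionCongrHom htriv htrans
    (fun j hj hji => Subgroup.subset_closure (Or.inl ⟨ρ j, ⟨j, ⟨hj, hji⟩, rfl⟩, rfl⟩))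
    (hρi ▸ Perm.apply_mem_orbit_comap_optionCongrHom hab hαa hαb hβa hβb hαβH hδ₂ hcycle)
  exact Perm.alternatingGroup_le_of_isPreprimitive_of_isThreeCycle_mem
    (Perm.isPreprimitive_of_isPretransitive_comap_optionCongrHom hK ⟨_, hδ₁, by simp⟩)
    (Perm.isThreeCycle_swap_mul_swap_same (by simp) (by simp) (by simpa using hab)) hcycle

/-- Let `Γ = (G, {ρ₀,…,ρ_{r−1}})` be a transitive sggi on a finite set `Ω`
with a perfect `i`-split `{a,b}` (with sides `O₁ ∋ a`, `O₂ ∋ b`, `ρᵢ = α·β·(a,b)`,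
generators before `i` fixing `O₂` pointwise and those after `i` fixing `O₁` pointwise).
Then the group of the rank-and-degree extension `Γ^{i↑}`, acting on `Ω ∪ {c}`
(formalized as `Option Ω` with new point `none`), contains the alternating group
`A_{n+1}`. -/
theorem stmt_8 {Ω : Type*} [Fintype Ω] [DecidableEq Ω] {r i : ℕ}
    (ρ : ℕ → Equiv.Perm Ω)
    (hir : i < r)
    (htriv : ∀ j, r ≤ j → ρ j = 1)
    (hinv : ∀ j < r, ρ j * ρ j = 1 ∧ ρ j ≠ 1)
    (hcomm : ∀ j k, j < r → k < r → 1 < Nat.dist j k → ρ j * ρ k = ρ k * ρ j)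
    (htrans : ∀ x y : Ω, ∃ g ∈ Subgroup.closure (Set.range ρ), g x = y)
    (O₁ O₂ : Set Ω) (a b : Ω)
    (hpart : O₁ ∪ O₂ = Set.univ) (hdisj : Disjoint O₁ O₂)
    (ha : a ∈ O₁) (hb : b ∈ O₂)
    (α β : Equiv.Perm Ω)
    (hρi : ρ i = α * β * Equiv.swap a b)
    (hαs : (α.support : Set Ω) ⊆ O₁ \ {a})
    (hβs : (β.support : Set Ω) ⊆ O₂ \ {b})
    (hlt : ∀ j < i, ∀ x ∈ O₂, ρ j x = x)
    (hgt : ∀ j, i < j → ∀ x ∈ O₁, ρ j x = x)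
    (huniq : ∀ x ∈ O₁, (ρ i) x ∈ O₂ → x = a) :
    alternatingGroup (Option Ω) ≤
      Subgroup.closure
        ((fun σ : Equiv.Perm Ω => Equiv.optionCongr σ) '' (ρ '' {j | j < r ∧ j ≠ i}) ∪
          {Equiv.optionCongr α * Equiv.swap (some a) none,
           Equiv.optionCongr β * Equiv.swap none (some b)}) :=
  stmt_8_general ρ hir htriv hinv htrans O₁ O₂ a b hdisj ha hb α β hρi hαs hβs
end

section
/- Let Γ = (G, {ρ₀,…,ρ_{r−1}}) be a string group generated by involutions such that Γ₀ = ⟨ρ₁,…,ρ_{r−1}⟩ and Γ_{r−1} = ⟨ρ₀,…,ρ_{r−2}⟩ both satisfy the intersection property (are string C-groups). Then Γ is a string C-group if and only if G₀ ∩ G_{r−1} = G_{0,r−1}, where G₀ = ⟨ρ₁,…,ρ_{r−1}⟩, G_{r−1} = ⟨ρ₀,…,ρ_{r−2}⟩ and G_{0,r−1} = ⟨ρ₁,…,ρ_{r−2}⟩. -/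
/-!
Write `Γ[I]` for `⟨ρ i : i ∈ I⟩` and index the generators by a linearly ordered set `S` with least
element `a` and greatest element `b`, generators separated by a third index commuting. Then for
`m ∈ S \ I` every element of `Γ[I]` factors as `x * y` with `x ∈ Γ[I ∩ Iio m]`, `y ∈ Γ[I ∩ Ioi m]`.

Splitting off the part above such an `m`, the hypothesis `Γ[S \ {a}] ⊓ Γ[S \ {b}] = Γ[S \ {a, b}]`
together with the intersection property of `S \ {b}` gives `Γ[I] ⊓ Γ[S \ {a}] = Γ[I \ {a}]` for
all `I ⊆ S`; with the intersection property of `S \ {a}` this settles `Γ[J] ⊓ Γ[K]` whenever `K`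
misses `a`, and, reversing the order, whenever `K` misses `b`. In general, cut `g ∈ Γ[J] ⊓ Γ[K]`
as `x * y = u * v` at some `mJ ∉ J` and `mK ∉ K`. Then `x⁻¹ * u = y * v⁻¹` lies in a subgroup
generated below the cut points and in one generated above them, which misses `a`, so it lies in
`Γ[J ∩ K]`. Hence `x, y ∈ Γ[K]`; as `x` avoids `b` and `y` avoids `a`, both lie in `Γ[J ∩ K]`.
-/

namespace StringGroup

variable {ι W : Type*} [Group W]

def IntersectionProperty (ρ : ι → W) (S : Set ι) : Prop :=
  ∀ J K : Set ι, J ⊆ S → K ⊆ S →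
    Subgroup.closure (ρ '' J) ⊓ Subgroup.closure (ρ '' K) = Subgroup.closure (ρ '' (J ∩ K))

structure IsStringOn [LinearOrder ι] (ρ : ι → W) (S : Set ι) (a b : ι) : Prop where
  bot_le : ∀ x ∈ S, a ≤ x
  le_top : ∀ x ∈ S, x ≤ b
  commute : ∀ i ∈ S, ∀ j ∈ S, ∀ m ∈ S, i < m → m < j → Commute (ρ i) (ρ j)

variable {ρ : ι → W} {S : Set ι} {a b : ι}

local notation "Γ[" I "]" => Subgroup.closure (ρ '' I)

lemma closure_image_mono {I J : Set ι} (h : I ⊆ J) : Γ[I] ≤ Γ[J] :=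
  Subgroup.closure_mono (Set.image_mono h)

lemma intersectionProperty_of_inf_le
    (h : ∀ J K : Set ι, J ⊆ S → K ⊆ S → Γ[J] ⊓ Γ[K] ≤ Γ[J ∩ K]) : IntersectionProperty ρ S :=
  fun J K hJ hK => (h J K hJ hK).antisymm
    (le_inf (closure_image_mono Set.inter_subset_left) (closure_image_mono Set.inter_subset_right))

lemma inf_closure_sdiff_le_of_notMem (hIPb : IntersectionProperty ρ (S \ {b}))
    (hab : Γ[S \ {a}] ⊓ Γ[S \ {b}] ≤ Γ[S \ {a, b}]) {I : Set ι} (hI : I ⊆ S) (hbI : b ∉ I) :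
    Γ[I] ⊓ Γ[S \ {a}] ≤ Γ[I \ {a}] := by
  have hIb : I ⊆ S \ {b} := fun x hx => ⟨hI hx, fun h => hbI (h ▸ hx)⟩
  calc Γ[I] ⊓ Γ[S \ {a}] ≤ Γ[I] ⊓ (Γ[S \ {a}] ⊓ Γ[S \ {b}]) :=
        le_inf inf_le_left (le_inf inf_le_right (inf_le_left.trans (closure_image_mono hIb)))
    _ ≤ Γ[I] ⊓ Γ[S \ {a, b}] := inf_le_inf_left _ hab
    _ = Γ[I ∩ (S \ {a, b})] := hIPb I _ hIb (Set.sdiff_subset_sdiff_right (by simp))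
    _ ≤ Γ[I \ {a}] := closure_image_mono fun x hx => ⟨hx.1, fun h => hx.2.2 (Or.inl h)⟩

variable [LinearOrder ι]

lemma exists_mul_eq_of_mem_closure_image {I : Set ι} {m : ι} (hm : m ∉ I)
    (hcomm : ∀ i ∈ I, ∀ j ∈ I, i < m → m < j → Commute (ρ i) (ρ j)) {g : W} (hg : g ∈ Γ[I]) :
    ∃ x ∈ Γ[I ∩ Set.Iio m], ∃ y ∈ Γ[I ∩ Set.Ioi m], x * y = g := by
  have hsplit : I = I ∩ Set.Iio m ∪ I ∩ Set.Ioi m := by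
    rw [← Set.inter_union_distrib_left, Set.Iio_union_Ioi, ← Set.sdiff_eq,
      Set.sdiff_singleton_eq_self hm]
  have hcentral : Γ[I ∩ Set.Iio m] ≤ Subgroup.centralizer (Γ[I ∩ Set.Ioi m] : Set W) := by
    rw [Subgroup.centralizer_closure, Subgroup.closure_le]
    rintro _ ⟨i, ⟨hi, him⟩, rfl⟩
    rw [SetLike.mem_coe, Subgroup.mem_centralizer_iff]
    rintro _ ⟨j, ⟨hj, hmj⟩, rfl⟩
    exact (hcomm i hi j hj him hmj).eq.symm
  rw [hsplit, Set.image_union, Subgroup.closure_union, ← SetLike.mem_coe,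
    Subgroup.coe_mul_of_left_le_normalizer_right _ _
      (hcentral.trans (Subgroup.centralizer_le_normalizer _))] at hg
  exact Set.mem_mul.mp hg

namespace IsStringOn

lemma dual (hρ : IsStringOn ρ S a b) : IsStringOn (ι := ιᵒᵈ) ρ S b a where
  bot_le := hρ.le_top
  le_top := hρ.bot_le
  commute i hi j hj m hm him hmj := (hρ.commute j hj i hi m hm hmj him).symm

lemma inf_closure_sdiff_bot_le (hρ : IsStringOn ρ S a b) (hIPb : IntersectionProperty ρ (S \ {b}))
    (hab : Γ[S \ {a}] ⊓ Γ[S \ {b}] ≤ Γ[S \ {a, b}]) {I : Set ι} (hI : I ⊆ S) :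
    Γ[I] ⊓ Γ[S \ {a}] ≤ Γ[I \ {a}] := by
  by_cases hbI : b ∉ I
  · exact inf_closure_sdiff_le_of_notMem hIPb hab hI hbI
  by_cases hSI : S ⊆ I
  · exact inf_le_right.trans (closure_image_mono (Set.sdiff_subset_sdiff_left hSI))
  obtain ⟨m, hmS, hmI⟩ := Set.not_subset.mp hSI
  have hmb : m < b := (hρ.le_top m hmS).lt_of_ne fun h => hmI (h ▸ not_not.mp hbI)
  intro g hg
  obtain ⟨hgI, hga⟩ := Subgroup.mem_inf.mp hg
  obtain ⟨x, hx, y, hy, rfl⟩ := exists_mul_eq_of_mem_closure_image hmI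
    (fun i hi j hj => hρ.commute i (hI hi) j (hI hj) m hmS) hgI
  have hIm : I ∩ Set.Ioi m ⊆ I \ {a} := fun j hj => ⟨hj.1, ((hρ.bot_le m hmS).trans_lt hj.2).ne'⟩
  have hya : y ∈ Γ[S \ {a}] := closure_image_mono (hIm.trans (Set.sdiff_subset_sdiff_left hI)) hy
  have hxa : x ∈ Γ[S \ {a}] := by simpa using mul_mem hga (inv_mem hya)
  have hx' : x ∈ Γ[(I ∩ Set.Iio m) \ {a}] := inf_closure_sdiff_le_of_notMem hIPb hab
    (Set.inter_subset_left.trans hI) (fun h => lt_asymm hmb h.2) (Subgroup.mem_inf.mpr ⟨hx, hxa⟩)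
  exact mul_mem (closure_image_mono (Set.sdiff_subset_sdiff_left Set.inter_subset_left) hx')
    (closure_image_mono hIm hy)

lemma inf_closure_le_of_bot_notMem (hρ : IsStringOn ρ S a b)
    (hIPa : IntersectionProperty ρ (S \ {a})) (hIPb : IntersectionProperty ρ (S \ {b}))
    (hab : Γ[S \ {a}] ⊓ Γ[S \ {b}] ≤ Γ[S \ {a, b}]) {J K : Set ι} (hJ : J ⊆ S) (hK : K ⊆ S)
    (haK : a ∉ K) : Γ[J] ⊓ Γ[K] ≤ Γ[J ∩ K] := by
  have hKa : K ⊆ S \ {a} := fun x hx => ⟨hK hx, fun h => haK (h ▸ hx)⟩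
  calc Γ[J] ⊓ Γ[K] ≤ Γ[J \ {a}] ⊓ Γ[K] :=
        le_inf ((inf_le_inf_left _ (closure_image_mono hKa)).trans
          (hρ.inf_closure_sdiff_bot_le hIPb hab hJ)) inf_le_right
    _ = Γ[J \ {a} ∩ K] := hIPa _ _ (Set.sdiff_subset_sdiff_left hJ) hKa
    _ ≤ Γ[J ∩ K] := closure_image_mono (Set.inter_subset_inter_left _ Set.sdiff_subset)

lemma inf_closure_le_of_top_notMem (hρ : IsStringOn ρ S a b)
    (hIPa : IntersectionProperty ρ (S \ {a})) (hIPb : IntersectionProperty ρ (S \ {b}))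
    (hab : Γ[S \ {a}] ⊓ Γ[S \ {b}] ≤ Γ[S \ {a, b}]) {J K : Set ι} (hJ : J ⊆ S) (hK : K ⊆ S)
    (hbK : b ∉ K) : Γ[J] ⊓ Γ[K] ≤ Γ[J ∩ K] := by
  have hba : Γ[S \ {b}] ⊓ Γ[S \ {a}] ≤ Γ[S \ {b, a}] := by rwa [inf_comm, Set.pair_comm]
  exact inf_closure_le_of_bot_notMem (ι := ιᵒᵈ) hρ.dual hIPb hIPa hba hJ hK hbK

lemma inv_mul_mem_closure_inter (hρ : IsStringOn ρ S a b)
    (hIPa : IntersectionProperty ρ (S \ {a})) (hIPb : IntersectionProperty ρ (S \ {b}))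
    (hab : Γ[S \ {a}] ⊓ Γ[S \ {b}] ≤ Γ[S \ {a, b}]) {J K : Set ι} (hJ : J ⊆ S) (hK : K ⊆ S)
    {mJ mK : ι} (hmJ : mJ ∈ S) (hmK : mK ∈ S) {x y u v : W}
    (hx : x ∈ Γ[J ∩ Set.Iio mJ]) (hy : y ∈ Γ[J ∩ Set.Ioi mJ])
    (hu : u ∈ Γ[K ∩ Set.Iio mK]) (hv : v ∈ Γ[K ∩ Set.Ioi mK]) (h : x * y = u * v) :
    x⁻¹ * u ∈ Γ[J ∩ K] := by
  have hlow : x⁻¹ * u ∈ Γ[J ∩ Set.Iio mJ ∪ K ∩ Set.Iio mK] :=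
    mul_mem (inv_mem (closure_image_mono Set.subset_union_left hx))
      (closure_image_mono Set.subset_union_right hu)
  have hhigh : x⁻¹ * u ∈ Γ[J ∩ Set.Ioi mJ ∪ K ∩ Set.Ioi mK] := by
    have hyv : x⁻¹ * u = y * v⁻¹ := by
      rw [inv_mul_eq_iff_eq_mul, ← mul_assoc, eq_mul_inv_iff_mul_eq, h]
    rw [hyv]
    exact mul_mem (closure_image_mono Set.subset_union_left hy)
      (inv_mem (closure_image_mono Set.subset_union_right hv))
  have hlowS : J ∩ Set.Iio mJ ∪ K ∩ Set.Iio mK ⊆ S :=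
    Set.union_subset (Set.inter_subset_left.trans hJ) (Set.inter_subset_left.trans hK)
  have hhighS : J ∩ Set.Ioi mJ ∪ K ∩ Set.Ioi mK ⊆ S :=
    Set.union_subset (Set.inter_subset_left.trans hJ) (Set.inter_subset_left.trans hK)
  have ha : a ∉ J ∩ Set.Ioi mJ ∪ K ∩ Set.Ioi mK := by
    rintro (⟨-, h⟩ | ⟨-, h⟩)
    exacts [not_lt_of_ge (hρ.bot_le mJ hmJ) h, not_lt_of_ge (hρ.bot_le mK hmK) h]
  refine closure_image_mono ?_ (hρ.inf_closure_le_of_bot_notMem hIPa hIPb hab hlowS hhighS ha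
    (Subgroup.mem_inf.mpr ⟨hlow, hhigh⟩))
  rintro i ⟨⟨hiJ, hilJ⟩ | ⟨hiK, hilK⟩, ⟨hiJ', higJ⟩ | ⟨hiK', higK⟩⟩
  exacts [(lt_asymm hilJ higJ).elim, ⟨hiJ, hiK'⟩, ⟨hiJ', hiK⟩, (lt_asymm hilK higK).elim]

theorem intersectionProperty (hρ : IsStringOn ρ S a b)
    (hIPa : IntersectionProperty ρ (S \ {a})) (hIPb : IntersectionProperty ρ (S \ {b}))
    (hab : Γ[S \ {a}] ⊓ Γ[S \ {b}] ≤ Γ[S \ {a, b}]) : IntersectionProperty ρ S := by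
  refine intersectionProperty_of_inf_le fun J K hJ hK => ?_
  by_cases hSJ : S ⊆ J
  · exact inf_le_right.trans (closure_image_mono fun x hx => ⟨hSJ (hK hx), hx⟩)
  by_cases hSK : S ⊆ K
  · exact inf_le_left.trans (closure_image_mono fun x hx => ⟨hx, hSK (hJ hx)⟩)
  obtain ⟨mJ, hmJS, hmJ⟩ := Set.not_subset.mp hSJ
  obtain ⟨mK, hmKS, hmK⟩ := Set.not_subset.mp hSK
  intro g hg
  obtain ⟨hgJ, hgK⟩ := Subgroup.mem_inf.mp hg
  obtain ⟨x, hx, y, hy, rfl⟩ := exists_mul_eq_of_mem_closure_image hmJ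
    (fun i hi j hj => hρ.commute i (hJ hi) j (hJ hj) mJ hmJS) hgJ
  obtain ⟨u, hu, v, hv, huv⟩ := exists_mul_eq_of_mem_closure_image hmK
    (fun i hi j hj => hρ.commute i (hK hi) j (hK hj) mK hmKS) hgK
  have hz := hρ.inv_mul_mem_closure_inter hIPa hIPb hab hJ hK hmJS hmKS hx hy hu hv huv.symm
  have hxK : x ∈ Γ[K] := by
    have h : u * (x⁻¹ * u)⁻¹ ∈ Γ[K] := mul_mem (closure_image_mono Set.inter_subset_left hu)
      (inv_mem (closure_image_mono Set.inter_subset_right hz))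
    rwa [mul_inv_rev, inv_inv, mul_inv_cancel_left] at h
  have hyK : y ∈ Γ[K] := by
    have h := mul_mem (inv_mem hxK) hgK
    rwa [inv_mul_cancel_left] at h
  have hJlow : J ∩ Set.Iio mJ ⊆ S := Set.inter_subset_left.trans hJ
  have hJhigh : J ∩ Set.Ioi mJ ⊆ S := Set.inter_subset_left.trans hJ
  have hxJK := hρ.inf_closure_le_of_top_notMem hIPa hIPb hab hK hJlow
    (fun h => not_lt_of_ge (hρ.le_top mJ hmJS) h.2) (Subgroup.mem_inf.mpr ⟨hxK, hx⟩)
  have hyJK := hρ.inf_closure_le_of_bot_notMem hIPa hIPb hab hK hJhigh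
    (fun h => not_lt_of_ge (hρ.bot_le mJ hmJS) h.2) (Subgroup.mem_inf.mpr ⟨hyK, hy⟩)
  have hsub : ∀ T : Set ι, K ∩ (J ∩ T) ⊆ J ∩ K := fun _ _ hi => ⟨hi.2.1, hi.1⟩
  exact mul_mem (closure_image_mono (hsub _) hxJK) (closure_image_mono (hsub _) hyJK)

theorem intersectionProperty_iff (hρ : IsStringOn ρ S a b)
    (hIPa : IntersectionProperty ρ (S \ {a})) (hIPb : IntersectionProperty ρ (S \ {b})) :
    IntersectionProperty ρ S ↔ Γ[S \ {a}] ⊓ Γ[S \ {b}] = Γ[S \ {a, b}] := by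
  have hdiff : S \ {a} ∩ (S \ {b}) = S \ {a, b} := by
    rw [Set.sdiff_inter_sdiff, Set.singleton_union]
  exact ⟨fun h => hdiff ▸ h _ _ Set.sdiff_subset Set.sdiff_subset,
    fun h => hρ.intersectionProperty hIPa hIPb h.le⟩

end IsStringOn

end StringGroup

theorem stmt_12_general {W : Type*} [Group W] {r : ℕ}
    (ρ : ℕ → W)
    (hcomm : ∀ i j, i < r → j < r → 1 < Nat.dist i j → ρ i * ρ j = ρ j * ρ i)
    (hIP0 : ∀ J K : Set ℕ, J ⊆ Set.Iio r \ {0} → K ⊆ Set.Iio r \ {0} →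
      Subgroup.closure (ρ '' J) ⊓ Subgroup.closure (ρ '' K) = Subgroup.closure (ρ '' (J ∩ K)))
    (hIPlast : ∀ J K : Set ℕ, J ⊆ Set.Iio r \ {r - 1} → K ⊆ Set.Iio r \ {r - 1} →
      Subgroup.closure (ρ '' J) ⊓ Subgroup.closure (ρ '' K) = Subgroup.closure (ρ '' (J ∩ K))) :
    (∀ J K : Set ℕ, J ⊆ Set.Iio r → K ⊆ Set.Iio r →
        Subgroup.closure (ρ '' J) ⊓ Subgroup.closure (ρ '' K) =
          Subgroup.closure (ρ '' (J ∩ K))) ↔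
      Subgroup.closure (ρ '' (Set.Iio r \ {0})) ⊓
          Subgroup.closure (ρ '' (Set.Iio r \ {r - 1})) =
        Subgroup.closure (ρ '' (Set.Iio r \ {0, r - 1})) := by
  have hρ : StringGroup.IsStringOn ρ (Set.Iio r) 0 (r - 1) :=
    { bot_le := fun x _ => x.zero_le
      le_top := fun _ hx => Nat.le_sub_one_of_lt hx
      commute := fun i hi j hj _ _ him hmj => hcomm i j hi hj (by unfold Nat.dist; omega) }
  exact hρ.intersectionProperty_iff hIP0 hIPlast

/-- Proposition 2E16 of McMullen–Schulte: Let `Γ = (G, {ρ₀,…,ρ_{r−1}})` be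
an sggi such that `Γ₀ = ⟨ρ₁,…,ρ_{r−1}⟩` and `Γ_{r−1} = ⟨ρ₀,…,ρ_{r−2}⟩` both satisfy the
intersection property. Then `Γ` is a string C-group iff
`G₀ ∩ G_{r−1} = G_{0,r−1}`. -/
theorem stmt_12 {W : Type*} [Group W] {r : ℕ} (hr : 2 ≤ r)
    (ρ : ℕ → W)
    (hinv : ∀ i < r, ρ i * ρ i = 1 ∧ ρ i ≠ 1)
    (hcomm : ∀ i j, i < r → j < r → 1 < Nat.dist i j → ρ i * ρ j = ρ j * ρ i)
    (hIP0 : ∀ J K : Set ℕ, J ⊆ Set.Iio r \ {0} → K ⊆ Set.Iio r \ {0} →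
      Subgroup.closure (ρ '' J) ⊓ Subgroup.closure (ρ '' K) = Subgroup.closure (ρ '' (J ∩ K)))
    (hIPlast : ∀ J K : Set ℕ, J ⊆ Set.Iio r \ {r - 1} → K ⊆ Set.Iio r \ {r - 1} →
      Subgroup.closure (ρ '' J) ⊓ Subgroup.closure (ρ '' K) = Subgroup.closure (ρ '' (J ∩ K))) :
    (∀ J K : Set ℕ, J ⊆ Set.Iio r → K ⊆ Set.Iio r →
        Subgroup.closure (ρ '' J) ⊓ Subgroup.closure (ρ '' K) =
          Subgroup.closure (ρ '' (J ∩ K))) ↔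
      Subgroup.closure (ρ '' (Set.Iio r \ {0})) ⊓
          Subgroup.closure (ρ '' (Set.Iio r \ {r - 1})) =
        Subgroup.closure (ρ '' (Set.Iio r \ {0, r - 1})) :=
  stmt_12_general ρ hcomm hIP0 hIPlast
end

section
/- Let Γ = (G, {ρ₀,…,ρ_{r−1}}) be a transitive sggi with a perfect split of label i and a perfect split of label j, i < j. If l is the label of a perfect split of the subgroup Γ_{\{i,…,j\}} = ⟨ρᵢ,…,ρⱼ⟩ (acting on the union of the relevant orbit with the split endpoints), then l is the label of a perfect split of Γ. -/
/-- `l` is the label of a perfect split of the sggi whose generators are `ρ j` for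
`j ∈ I`: there are points `a, b` in distinct orbits `O₁, O₂` of the group generated by
the `ρ j` with `j ∈ I \ {l}`, such that `ρ l` maps `a` to `b` and otherwise preserves
each of `O₁` and `O₂`, all generators with index `< l` fix `O₂` pointwise, all generators
with index `> l` fix `O₁` pointwise, and all generators are supported on `O₁ ∪ O₂`. -/
def IsPerfectSplit {Ω : Type*} [Fintype Ω] [DecidableEq Ω]
    (ρ : ℕ → Equiv.Perm Ω) (I : Set ℕ) (l : ℕ) : Prop :=
  l ∈ I ∧ ∃ a b : Ω,
    Disjoint {x : Ω | ∃ g ∈ Subgroup.closure (ρ '' (I \ {l})), g a = x}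
      {x : Ω | ∃ g ∈ Subgroup.closure (ρ '' (I \ {l})), g b = x} ∧
    ρ l a = b ∧
    (∀ x ∈ {x : Ω | ∃ g ∈ Subgroup.closure (ρ '' (I \ {l})), g a = x}, x ≠ a →
      ρ l x ∈ {x : Ω | ∃ g ∈ Subgroup.closure (ρ '' (I \ {l})), g a = x}) ∧
    (∀ x ∈ {x : Ω | ∃ g ∈ Subgroup.closure (ρ '' (I \ {l})), g b = x}, x ≠ b →
      ρ l x ∈ {x : Ω | ∃ g ∈ Subgroup.closure (ρ '' (I \ {l})), g b = x}) ∧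
    (∀ j ∈ I, j < l → ∀ x ∈ {x : Ω | ∃ g ∈ Subgroup.closure (ρ '' (I \ {l})), g b = x},
      ρ j x = x) ∧
    (∀ j ∈ I, l < j → ∀ x ∈ {x : Ω | ∃ g ∈ Subgroup.closure (ρ '' (I \ {l})), g a = x},
      ρ j x = x) ∧
    (∀ j ∈ I, ((ρ j).support : Set Ω) ⊆
      {x : Ω | ∃ g ∈ Subgroup.closure (ρ '' (I \ {l})), g a = x} ∪
      {x : Ω | ∃ g ∈ Subgroup.closure (ρ '' (I \ {l})), g b = x})


/-!
Let `ρ l a = b` be the split of `⟨ρ i, …, ρ j⟩` and let `A`, `B` be the orbits of `a`, `b` under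
all generators other than `ρ l`. The point `a` is moved by `ρ l` with `l < j`, so the perfect split
at `j` puts it on the side fixed by every `ρ k` with `k > j`; with the split of `⟨ρ i, …, ρ j⟩`
it is fixed by every `ρ k` with `k > l`. Generators on opposite sides of `l` commute, so this spreads over
all of `A`; symmetrically `B` is fixed by every `ρ k` with `k < l`. A point of `A ∩ B` would then
be fixed by the whole group, whence `A` and `B` are disjoint. Since `ρ l` moves only points of the
small orbits, it preserves `A \ {a}` and `B \ {b}`, and by transitivity `A ∪ B` is everything.
-/

section GenOrbit

variable {Ω : Type*} {ρ : ℕ → Equiv.Perm Ω} {T : Set ℕ}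

-- Definitionally the orbits in `IsPerfectSplit`, so the lemmas below apply to them directly.
def genOrbit (ρ : ℕ → Equiv.Perm Ω) (T : Set ℕ) (x : Ω) : Set Ω :=
  {y | ∃ g ∈ Subgroup.closure (ρ '' T), g x = y}

lemma mem_genOrbit_self (x : Ω) : x ∈ genOrbit ρ T x :=
  ⟨1, one_mem _, rfl⟩

lemma mem_genOrbit_comm {x y : Ω} : y ∈ genOrbit ρ T x ↔ x ∈ genOrbit ρ T y := by
  constructor <;> rintro ⟨g, hg, rfl⟩ <;> exact ⟨g⁻¹, inv_mem hg, by simp⟩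

lemma genOrbit_mono {T' : Set ℕ} (h : T ⊆ T') (x : Ω) : genOrbit ρ T x ⊆ genOrbit ρ T' x := by
  rintro _ ⟨g, hg, rfl⟩
  exact ⟨g, Subgroup.closure_mono (Set.image_mono h) hg, rfl⟩

lemma mapsTo_genOrbit {k : ℕ} (hk : k ∈ T) (x : Ω) :
    Set.MapsTo (ρ k) (genOrbit ρ T x) (genOrbit ρ T x) := by
  rintro _ ⟨g, hg, rfl⟩
  exact ⟨ρ k * g, mul_mem (Subgroup.subset_closure ⟨k, hk, rfl⟩) hg, rfl⟩

lemma genOrbit_subset_of_mapsTo (hρ : ∀ k ∈ T, ρ k * ρ k = 1) {P : Set Ω}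
    (hP : ∀ k ∈ T, Set.MapsTo (ρ k) P P) {x : Ω} (hx : x ∈ P) : genOrbit ρ T x ⊆ P := by
  rintro _ ⟨g, hg, rfl⟩
  suffices Set.MapsTo g P P from this hx
  induction hg using Subgroup.closure_induction'' with
  | mem _ hσ =>
    obtain ⟨k, hk, rfl⟩ := hσ
    exact hP k hk
  | inv_mem _ hσ =>
    obtain ⟨k, hk, rfl⟩ := hσ
    rw [inv_eq_of_mul_eq_one_right (hρ k hk)]
    exact hP k hk
  | one => exact Set.mapsTo_id P
  | mul _ _ _ _ hσ hτ => exact hσ.comp hτ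

lemma eq_of_mem_genOrbit_of_forall_apply_eq_self {x z : Ω} (hz : ∀ k ∈ T, ρ k z = z)
    (hx : x ∈ genOrbit ρ T z) : x = z := by
  obtain ⟨g, hg, rfl⟩ := hx
  have : Subgroup.closure (ρ '' T) ≤ MulAction.stabilizer (Equiv.Perm Ω) z :=
    Subgroup.closure_le _ |>.2 <| by rintro _ ⟨k, hk, rfl⟩; exact hz k hk
  exact this hg

lemma disjoint_genOrbit {a b : Ω} (hab : a ≠ b)
    (hfix : ∀ z ∈ genOrbit ρ T a, z ∈ genOrbit ρ T b → ∀ k ∈ T, ρ k z = z) :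
    Disjoint (genOrbit ρ T a) (genOrbit ρ T b) :=
  Set.disjoint_left.2 fun z ha hb => hab <|
    (eq_of_mem_genOrbit_of_forall_apply_eq_self (hfix z ha hb) (mem_genOrbit_comm.1 ha)).trans
      (eq_of_mem_genOrbit_of_forall_apply_eq_self (hfix z ha hb) (mem_genOrbit_comm.1 hb)).symm

lemma forall_mem_genOrbit_apply_eq_self (hρ : ∀ k ∈ T, ρ k * ρ k = 1) {K : Set ℕ}
    (hT : ∀ m ∈ T, m ∈ K ∨ ∀ k ∈ K, Commute (ρ k) (ρ m)) {x : Ω} (hx : ∀ k ∈ K, ρ k x = x) :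
    ∀ y ∈ genOrbit ρ T x, ∀ k ∈ K, ρ k y = y := by
  refine genOrbit_subset_of_mapsTo hρ (P := {y | ∀ k ∈ K, ρ k y = y}) (fun m hm y hy => ?_) hx
  rcases hT m hm with hmK | hcomm
  · rwa [hy m hmK]
  · intro k hk
    rw [← Equiv.Perm.mul_apply, (hcomm k hk).eq, Equiv.Perm.mul_apply, hy k hk]

lemma Set.MapsTo.union_of_swap {σ : Ω → Ω} {A B : Set Ω} {a b : Ω} (ha : a ∈ A) (hb : b ∈ B)
    (hab : σ a = b) (hba : σ b = a) (hA : ∀ x ∈ A, x ≠ a → σ x ∈ A)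
    (hB : ∀ x ∈ B, x ≠ b → σ x ∈ B) : Set.MapsTo σ (A ∪ B) (A ∪ B) := by
  rintro x (hx | hx)
  · rcases eq_or_ne x a with rfl | hxa
    · exact Or.inr (hab ▸ hb)
    · exact Or.inl (hA x hx hxa)
  · rcases eq_or_ne x b with rfl | hxb
    · exact Or.inl (hba ▸ ha)
    · exact Or.inr (hB x hx hxb)

section Support

variable [Fintype Ω] [DecidableEq Ω]

lemma eq_univ_of_support_subset (hρ : ∀ k ∈ T, ρ k * ρ k = 1)
    (htrans : ∀ x y : Ω, y ∈ genOrbit ρ T x) {P : Set Ω}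
    (hsupp : ∀ k ∈ T, ((ρ k).support : Set Ω) ⊆ P) {a : Ω} (ha : a ∈ P) : P = Set.univ := by
  refine Set.eq_univ_of_forall fun x => genOrbit_subset_of_mapsTo hρ (fun k hk y hy => ?_) ha
    (htrans a x)
  by_cases hky : ρ k y = y
  · rwa [hky]
  · exact hsupp k hk (Equiv.Perm.apply_mem_support.2 (Equiv.Perm.mem_support.2 hky))

lemma IsPerfectSplit.apply_eq_self_of_gt {I : Set ℕ} {j l k : ℕ}
    (hρ : ∀ k ∈ I, ρ k * ρ k = 1) (htrans : ∀ x y : Ω, y ∈ genOrbit ρ I x)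
    (hj : IsPerfectSplit ρ I j) (hl : l ∈ I) (hlj : l < j) {x : Ω} (hx : ρ l x ≠ x)
    (hk : k ∈ I) (hjk : j < k) : ρ k x = x := by
  obtain ⟨-, a, b, -, -, -, -, hfixB, hfixA, hsupp⟩ := hj
  have hcover := eq_univ_of_support_subset hρ htrans hsupp (Or.inl (mem_genOrbit_self a))
  rcases Set.eq_univ_iff_forall.1 hcover x with hxA | hxB
  · exact hfixA k hk hjk x hxA
  · exact absurd (hfixB l hl hlj x hxB) hx

lemma IsPerfectSplit.apply_eq_self_of_lt {I : Set ℕ} {i l k : ℕ}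
    (hρ : ∀ k ∈ I, ρ k * ρ k = 1) (htrans : ∀ x y : Ω, y ∈ genOrbit ρ I x)
    (hi : IsPerfectSplit ρ I i) (hl : l ∈ I) (hil : i < l) {x : Ω} (hx : ρ l x ≠ x)
    (hk : k ∈ I) (hki : k < i) : ρ k x = x := by
  obtain ⟨-, a, b, -, -, -, -, hfixB, hfixA, hsupp⟩ := hi
  have hcover := eq_univ_of_support_subset hρ htrans hsupp (Or.inl (mem_genOrbit_self a))
  rcases Set.eq_univ_iff_forall.1 hcover x with hxA | hxB
  · exact absurd (hfixA l hl hil x hxA) hx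
  · exact hfixB k hk hki x hxB

lemma apply_mem_genOrbit_of_support_subset {J : Set ℕ} (hJT : J ⊆ T) {σ : Equiv.Perm Ω}
    {a b : Ω} (hsupp : (σ.support : Set Ω) ⊆ genOrbit ρ J a ∪ genOrbit ρ J b)
    (hmap : ∀ x ∈ genOrbit ρ J a, x ≠ a → σ x ∈ genOrbit ρ J a)
    (hdisj : Disjoint (genOrbit ρ T a) (genOrbit ρ T b)) :
    ∀ x ∈ genOrbit ρ T a, x ≠ a → σ x ∈ genOrbit ρ T a := by
  intro x hx hxa
  by_cases hσx : σ x = x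
  · rwa [hσx]
  rcases hsupp (Equiv.Perm.mem_support.2 hσx) with hxA | hxB
  · exact genOrbit_mono hJT a (hmap x hxA hxa)
  · exact absurd (genOrbit_mono hJT b hxB) (Set.disjoint_left.1 hdisj hx)

lemma isPerfectSplit_of_apply_eq_self {r l : ℕ} {J : Set ℕ}
    (hρ : ∀ k ∈ Set.Iio r, ρ k * ρ k = 1)
    (hfar : ∀ k m, k < l → l < m → m < r → Commute (ρ k) (ρ m))
    (htrans : ∀ x y : Ω, y ∈ genOrbit ρ (Set.Iio r) x) (hlr : l < r) (hJ : J ⊆ Set.Iio r)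
    {a b : Ω} (hne : a ≠ b) (hab : ρ l a = b)
    (hmapA : ∀ x ∈ genOrbit ρ (J \ {l}) a, x ≠ a → ρ l x ∈ genOrbit ρ (J \ {l}) a)
    (hmapB : ∀ x ∈ genOrbit ρ (J \ {l}) b, x ≠ b → ρ l x ∈ genOrbit ρ (J \ {l}) b)
    (hsupp : ((ρ l).support : Set Ω) ⊆ genOrbit ρ (J \ {l}) a ∪ genOrbit ρ (J \ {l}) b)
    (hfixA : ∀ k ∈ Set.Iio r, l < k → ρ k a = a) (hfixB : ∀ k ∈ Set.Iio r, k < l → ρ k b = b) :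
    IsPerfectSplit ρ (Set.Iio r) l := by
  have hba : ρ l b = a := by
    rw [← hab]
    simpa using DFunLike.congr_fun (hρ l hlr) a
  have hρ' : ∀ k ∈ Set.Iio r \ {l}, ρ k * ρ k = 1 := fun k hk => hρ k hk.1
  have hA : ∀ x ∈ genOrbit ρ (Set.Iio r \ {l}) a, ∀ k ∈ Set.Iio r ∩ Set.Ioi l, ρ k x = x := by
    refine forall_mem_genOrbit_apply_eq_self hρ' (fun m ⟨hmr, hml⟩ => ?_)
      fun k hk => hfixA k hk.1 hk.2
    rcases lt_or_gt_of_ne hml with hml | hlm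
    · exact Or.inr fun k hk => (hfar m k hml hk.2 hk.1).symm
    · exact Or.inl ⟨hmr, hlm⟩
  have hB : ∀ x ∈ genOrbit ρ (Set.Iio r \ {l}) b, ∀ k ∈ Set.Iio l, ρ k x = x := by
    refine forall_mem_genOrbit_apply_eq_self hρ' (fun m ⟨hmr, hml⟩ => ?_)
      fun k hk => hfixB k (hk.trans hlr) hk
    rcases lt_or_gt_of_ne hml with hml | hlm
    · exact Or.inl hml
    · exact Or.inr fun k hk => hfar k m hk hlm hmr
  have hdisj := disjoint_genOrbit (T := Set.Iio r \ {l}) hne fun z hzA hzB k ⟨hkr, hkl⟩ =>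
    (lt_or_gt_of_ne hkl).elim (hB z hzB k) fun hlk => hA z hzA k ⟨hkr, hlk⟩
  have hJ' : J \ {l} ⊆ Set.Iio r \ {l} := Set.sdiff_subset_sdiff_left hJ
  have hmapA' := apply_mem_genOrbit_of_support_subset hJ' hsupp hmapA hdisj
  have hmapB' := apply_mem_genOrbit_of_support_subset hJ' (Set.union_comm _ _ ▸ hsupp) hmapB
    hdisj.symm
  have hcover : ∀ x, x ∈ genOrbit ρ (Set.Iio r \ {l}) a ∪ genOrbit ρ (Set.Iio r \ {l}) b := by
    refine fun x => genOrbit_subset_of_mapsTo hρ (fun k hk => ?_)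
      (Or.inl (mem_genOrbit_self a)) (htrans a x)
    rcases eq_or_ne k l with rfl | hkl
    · exact .union_of_swap (mem_genOrbit_self a) (mem_genOrbit_self b) hab hba hmapA' hmapB'
    · have hk' : k ∈ Set.Iio r \ {l} := ⟨hk, hkl⟩
      exact (mapsTo_genOrbit hk' a).union_union (mapsTo_genOrbit hk' b)
  exact ⟨hlr, a, b, hdisj, hab, hmapA', hmapB', fun k _ hkl x hx => hB x hx k hkl,
    fun k hk hlk x hx => hA x hx k ⟨hk, hlk⟩, fun k _ x _ => hcover x⟩

end Support

end GenOrbit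

theorem stmt_17_general {Ω : Type*} [Fintype Ω] [DecidableEq Ω] {r i j l : ℕ}
    (ρ : ℕ → Equiv.Perm Ω)
    (hinv : ∀ k < r, ρ k * ρ k = 1 ∧ ρ k ≠ 1)
    (hcomm : ∀ k m, k < r → m < r → 1 < Nat.dist k m → ρ k * ρ m = ρ m * ρ k)
    (htrans : ∀ x y : Ω, ∃ g ∈ Subgroup.closure (ρ '' Set.Iio r), g x = y)
    (hjr : j < r)
    (hi : IsPerfectSplit ρ (Set.Iio r) i)
    (hj : IsPerfectSplit ρ (Set.Iio r) j)
    (hl : IsPerfectSplit ρ (Set.Icc i j) l) :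
    IsPerfectSplit ρ (Set.Iio r) l := by
  obtain ⟨⟨hil, hlj⟩, a, b, hdisj, hab, hmapA, hmapB, hfixB, hfixA, hsupp⟩ := hl
  rcases hil.eq_or_lt with rfl | hil
  · exact hi
  rcases hlj.eq_or_lt with rfl | hlj
  · exact hj
  have hρ : ∀ k ∈ Set.Iio r, ρ k * ρ k = 1 := fun k hk => (hinv k hk).1
  have hlr : l < r := hlj.trans hjr
  have hne : a ≠ b := hdisj.ne_of_mem (mem_genOrbit_self a) (mem_genOrbit_self b)
  have hb : ρ l b ≠ b := fun h => hne ((ρ l).injective (hab.trans h.symm))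
  refine isPerfectSplit_of_apply_eq_self hρ
    (fun k m hkl hlm hmr => hcomm k m (by omega) hmr (by unfold Nat.dist; omega)) htrans hlr
    (fun k hk => hk.2.trans_lt hjr) hne hab hmapA hmapB (hsupp l ⟨hil.le, hlj.le⟩)
    (fun k hk hlk => ?_) (fun k hk hkl => ?_)
  · rcases le_or_gt k j with hkj | hjk
    · exact hfixA k ⟨(hil.trans hlk).le, hkj⟩ hlk a (mem_genOrbit_self a)
    · exact hj.apply_eq_self_of_gt hρ htrans hlr hlj (hab ▸ hne.symm) hk hjk
  · rcases le_or_gt i k with hik | hki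
    · exact hfixB k ⟨hik, (hkl.trans hlj).le⟩ hkl b (mem_genOrbit_self b)
    · exact hi.apply_eq_self_of_lt hρ htrans hlr hil hb hk hki

/-- Let `Γ = (G, {ρ₀,…,ρ_{r−1}})` be a transitive sggi with perfect splits
of labels `i < j`. If `l` is the label of a perfect split of the subgroup
`Γ_{{i,…,j}} = ⟨ρᵢ,…,ρⱼ⟩`, then `l` is the label of a perfect split of `Γ`. -/
theorem stmt_17 {Ω : Type*} [Fintype Ω] [DecidableEq Ω] {r i j l : ℕ}
    (ρ : ℕ → Equiv.Perm Ω)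
    (htriv : ∀ k, r ≤ k → ρ k = 1)
    (hinv : ∀ k < r, ρ k * ρ k = 1 ∧ ρ k ≠ 1)
    (hcomm : ∀ k m, k < r → m < r → 1 < Nat.dist k m → ρ k * ρ m = ρ m * ρ k)
    (htrans : ∀ x y : Ω, ∃ g ∈ Subgroup.closure (ρ '' Set.Iio r), g x = y)
    (hij : i < j) (hjr : j < r)
    (hi : IsPerfectSplit ρ (Set.Iio r) i)
    (hj : IsPerfectSplit ρ (Set.Iio r) j)
    (hl : IsPerfectSplit ρ (Set.Icc i j) l) :
    IsPerfectSplit ρ (Set.Iio r) l :=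
  stmt_17_general ρ hinv hcomm htrans hjr hi hj hl
end
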